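/- arXiv:2604.10274 — 5 statements merged into one kernel-verified Lean document; each statement's English description precedes it below -/
import Mathlib

section
/- Fix ι ∈ {0,1}, let π ∈ Π_ι with opposite marginal P = r·ν_ῑ + P⊥ (Lebesgue decomposition with respect to ν_ῑ), and fix t ≥ 0. Then there exist finite measures σ_t and π_t^ov on Ω0 × Ω1 such that π = σ_t + π_t^ov, σ_t ∈ Feas_ῑ(t), σ_t(Eᶜ) = π_t^ov(Eᶜ) = 0, and π_t^ov(Ω0 × Ω1) = Over^π(t). Moreover, for any finite measures σ, π^ov with π = σ + π^ov, σ ∈ Feas_ῑ(t), and π^ov(Ω0 × Ω1) = Over^π(t), the Ω_ῑ-marginals are uniquely determined: the Ω_ῑ-marginal of σ equals min(r,t)·ν_ῑ and the Ω_ῑ-marginal of π^ov equals P⊥ + max(r − t, 0)·ν_ῑ. -/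
/- STATEMENT 2: Overflow decomposition with uniquely determined opposite marginals.
The side `ι ∈ {0,1}` is formalized abstractly: `X` plays the role of `Ω_ι` and `Y` of `Ω_ῑ`. -/

open MeasureTheory ProbabilityTheory Filter
open scoped ENNReal NNReal

noncomputable section

variable {X Y : Type} [MeasurableSpace X] [MeasurableSpace Y]

/-- Refinements of `νX` on side `X`. -/
def Plans (E : Set (X × Y)) (νX : Measure X) : Set (Measure (X × Y)) :=
  {π | IsFiniteMeasure π ∧ π Eᶜ = 0 ∧ π.map Prod.fst = νX}

/-- Capped feasible subplans at level `t`. -/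
def Feas (E : Set (X × Y)) (νX : Measure X) (νY : Measure Y) (t : ℝ) :
    Set (Measure (X × Y)) :=
  {σ | IsFiniteMeasure σ ∧ σ Eᶜ = 0 ∧ σ.map Prod.fst ≤ νX ∧
    σ.map Prod.snd ≤ (ENNReal.ofReal t) • νY}

/-- Overflow profile `Over^π(t) = P⊥(Y) + ∫ (r − t)₊ dνY`. -/
def Overflow (νY : Measure Y) (π : Measure (X × Y)) (t : ℝ) : ℝ≥0∞ :=
  ((π.map Prod.snd).singularPart νY) Set.univ
    + ∫⁻ y, ((π.map Prod.snd).rnDeriv νY y - ENNReal.ofReal t) ∂νY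

/-! Cut `π` fibrewise over `Y`: above each `y` keep the fraction `min (r y) t / r y` of `π`, where
`r` is the density of the `Y`-marginal `P = r • νY + P⊥`, and send the rest, together with all of
`P⊥`, to the overflow part. The marginals are then `min r t • νY` and `P⊥ + (r - t)₊ • νY`.
Conversely, in any such decomposition the `Y`-density `q` of the feasible part satisfies
`q ≤ min r t`, so the overflow mass `P⊥(Y) + ∫ (r - q) dνY` is at least `Over(t)`, with equality
only if `q = min r t` a.e. -/

lemma ENNReal.eq_min_of_tsub_eq_tsub {a b c : ℝ≥0∞} (ha : a ≠ ∞) (hb : b ≤ a)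
    (h : a - c = a - b) : b = min a c :=
  (ENNReal.sub_right_inj ha hb (min_le_left a c)).1 (by rw [tsub_min, h])

namespace MeasureTheory.Measure

variable {α : Type*} [MeasurableSpace α] {P Q R ν : Measure α} {c : ℝ≥0∞}

lemma rnDeriv_le_of_le_smul [SigmaFinite ν] (h : Q ≤ c • ν) :
    Q.rnDeriv ν ≤ᵐ[ν] fun _ => c := by
  refine ae_le_of_forall_setLIntegral_le_of_sigmaFinite (Q.measurable_rnDeriv ν) fun s _ _ => ?_
  rw [setLIntegral_const, ← smul_eq_mul, ← smul_apply]
  exact (setLIntegral_rnDeriv_le s).trans (h s)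

lemma withDensity_eq_singularPart_add (P ν : Measure α) [P.HaveLebesgueDecomposition ν]
    {g : α → ℝ≥0∞} (hg : Measurable g) :
    P.withDensity g = (P.singularPart ν).withDensity g + ν.withDensity (P.rnDeriv ν * g) := by
  conv_lhs => rw [P.haveLebesgueDecomposition_add ν]
  rw [withDensity_add_measure, withDensity_mul ν (P.measurable_rnDeriv ν) hg]

lemma withDensity_add_withDensity_one_sub (μ : Measure α) {f : α → ℝ≥0∞}
    (hf : Measurable f) (hf_le : f ≤ 1) : μ.withDensity f + μ.withDensity (1 - f) = μ := by
  rw [← withDensity_add_left hf, add_tsub_cancel_of_le hf_le, withDensity_one]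

lemma isFiniteMeasure_of_add_eq [IsFiniteMeasure P] (hPQR : Q + R = P) :
    IsFiniteMeasure Q ∧ IsFiniteMeasure R :=
  ⟨isFiniteMeasure_of_le P (hPQR ▸ Measure.le_add_right le_rfl),
    isFiniteMeasure_of_le P (hPQR ▸ Measure.le_add_left le_rfl)⟩

lemma eq_singularPart_add_withDensity_rnDeriv_sub [IsFiniteMeasure P] [SigmaFinite ν]
    (hQ : Q ≪ ν) (hPQR : Q + R = P) :
    R = P.singularPart ν + ν.withDensity fun x => P.rnDeriv ν x - Q.rnDeriv ν x := by
  obtain ⟨_, _⟩ := isFiniteMeasure_of_add_eq hPQR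
  have h_sing : R.singularPart ν = P.singularPart ν := by
    rw [← hPQR, singularPart_add, singularPart_eq_zero_of_ac hQ, zero_add]
  have h_rnDeriv : R.rnDeriv ν =ᵐ[ν] fun x => P.rnDeriv ν x - Q.rnDeriv ν x := by
    filter_upwards [rnDeriv_add Q R ν, Q.rnDeriv_lt_top ν] with x hx hQx
    rw [← hPQR, hx, Pi.add_apply, ENNReal.add_sub_cancel_left hQx.ne]
  conv_lhs => rw [R.haveLebesgueDecomposition_add ν, h_sing]
  rw [withDensity_congr_ae h_rnDeriv]

lemma rnDeriv_ae_eq_min_of_add_eq [IsFiniteMeasure P] [SigmaFinite ν] (hQ : Q ≤ c • ν)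
    (hPQR : Q + R = P)
    (hR : R Set.univ = P.singularPart ν Set.univ + ∫⁻ x, (P.rnDeriv ν x - c) ∂ν) :
    Q.rnDeriv ν =ᵐ[ν] fun x => min (P.rnDeriv ν x) c := by
  have hQν : Q ≪ ν := (absolutelyContinuous_of_le hQ).trans smul_absolutelyContinuous
  obtain ⟨_, _⟩ := isFiniteMeasure_of_add_eq hPQR
  have hQ_le_P : ∀ᵐ x ∂ν, Q.rnDeriv ν x ≤ P.rnDeriv ν x := by
    filter_upwards [rnDeriv_add Q R ν] with x hx
    rw [← hPQR, hx]
    exact le_self_add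
  have h_int : ∫⁻ x, (P.rnDeriv ν x - c) ∂ν = ∫⁻ x, (P.rnDeriv ν x - Q.rnDeriv ν x) ∂ν := by
    have h_sing_ne_top : P.singularPart ν Set.univ ≠ ∞ := measure_ne_top _ _
    rw [← ENNReal.add_right_inj h_sing_ne_top, ← hR,
      eq_singularPart_add_withDensity_rnDeriv_sub hQν hPQR, add_apply,
      withDensity_apply _ MeasurableSet.univ, restrict_univ]
  have h_sub : (fun x => P.rnDeriv ν x - c) =ᵐ[ν] fun x => P.rnDeriv ν x - Q.rnDeriv ν x := by
    refine ae_eq_of_ae_le_of_lintegral_le ?_ ?_ (by fun_prop) h_int.ge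
    · filter_upwards [rnDeriv_le_of_le_smul hQ] with x hx
      exact tsub_le_tsub_left hx _
    · exact ne_top_of_le_ne_top (P.lintegral_rnDeriv_lt_top ν).ne
        (lintegral_mono fun _ => tsub_le_self)
  filter_upwards [h_sub, hQ_le_P, P.rnDeriv_lt_top ν] with x hx hQx hPx
  exact ENNReal.eq_min_of_tsub_eq_tsub hPx.ne hQx hx

lemma eq_withDensity_min_of_add_eq [IsFiniteMeasure P] [SigmaFinite ν] (hQ : Q ≤ c • ν)
    (hPQR : Q + R = P)
    (hR : R Set.univ = P.singularPart ν Set.univ + ∫⁻ x, (P.rnDeriv ν x - c) ∂ν) :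
    Q = ν.withDensity (fun x => min (P.rnDeriv ν x) c) ∧
      R = P.singularPart ν + ν.withDensity fun x => P.rnDeriv ν x - c := by
  have hQν : Q ≪ ν := (absolutelyContinuous_of_le hQ).trans smul_absolutelyContinuous
  have := (isFiniteMeasure_of_add_eq hPQR).1
  have h_min := rnDeriv_ae_eq_min_of_add_eq hQ hPQR hR
  refine ⟨?_, ?_⟩
  · rw [← withDensity_rnDeriv_eq Q ν hQν]
    exact withDensity_congr_ae h_min
  · rw [eq_singularPart_add_withDensity_rnDeriv_sub hQν hPQR]
    congr 1
    refine withDensity_congr_ae ?_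
    filter_upwards [h_min] with x hx
    rw [hx, tsub_min]

/-- The fraction `min r c / r` of `P` kept below the cap `c • ν`, where `r` is the `ν`-density
of `P`; it vanishes on a `ν`-null set carrying `P.singularPart ν`. -/
def capFraction (P ν : Measure α) (c : ℝ≥0∞) : α → ℝ≥0∞ :=
  (P.mutuallySingular_singularPart ν).nullSet.indicator
    fun x => min (P.rnDeriv ν x) c / P.rnDeriv ν x

lemma measurable_capFraction : Measurable (P.capFraction ν c) :=
  (((P.measurable_rnDeriv ν).min measurable_const).div (P.measurable_rnDeriv ν)).indicator
    (P.mutuallySingular_singularPart ν).measurableSet_nullSet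

lemma capFraction_le_one : P.capFraction ν c ≤ 1 := by
  intro x
  unfold capFraction
  by_cases hx : x ∈ (P.mutuallySingular_singularPart ν).nullSet
  · rw [Set.indicator_of_mem hx]
    exact (ENNReal.div_le_div_right (min_le_left _ _) _).trans ENNReal.div_self_le_one
  · rw [Set.indicator_of_notMem hx]
    exact zero_le

lemma capFraction_ae_eq_zero : P.capFraction ν c =ᵐ[P.singularPart ν] 0 := by
  filter_upwards [measure_eq_zero_iff_ae_notMem.1
    (P.mutuallySingular_singularPart ν).measure_nullSet] with x hx
  exact Set.indicator_of_notMem hx _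

lemma rnDeriv_mul_capFraction [SigmaFinite P] :
    P.rnDeriv ν * P.capFraction ν c =ᵐ[ν] fun x => min (P.rnDeriv ν x) c := by
  filter_upwards [compl_mem_ae_iff.2 (P.mutuallySingular_singularPart ν).measure_compl_nullSet,
    P.rnDeriv_lt_top ν] with x hx hx_lt_top
  rw [Pi.mul_apply, capFraction, Set.indicator_of_mem (by simpa using hx)]
  rcases eq_or_ne (P.rnDeriv ν x) 0 with h0 | h0
  · simp [h0]
  · exact ENNReal.mul_div_cancel h0 hx_lt_top.ne

lemma withDensity_capFraction [SigmaFinite P] [SigmaFinite ν] :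
    P.withDensity (P.capFraction ν c) = ν.withDensity fun x => min (P.rnDeriv ν x) c := by
  rw [P.withDensity_eq_singularPart_add ν measurable_capFraction,
    withDensity_congr_ae capFraction_ae_eq_zero, withDensity_zero, zero_add,
    withDensity_congr_ae rnDeriv_mul_capFraction]

lemma withDensity_one_sub_capFraction [SigmaFinite P] [SigmaFinite ν] :
    P.withDensity (1 - P.capFraction ν c)
      = P.singularPart ν + ν.withDensity fun x => P.rnDeriv ν x - c := by
  have h_sing : 1 - P.capFraction ν c =ᵐ[P.singularPart ν] 1 := by
    filter_upwards [capFraction_ae_eq_zero (c := c)] with x hx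
    simp [hx]
  have h_ac : P.rnDeriv ν * (1 - P.capFraction ν c) =ᵐ[ν] fun x => P.rnDeriv ν x - c := by
    filter_upwards [rnDeriv_mul_capFraction (P := P) (ν := ν) (c := c), P.rnDeriv_lt_top ν]
      with x hx hx_lt_top
    rw [Pi.mul_apply] at hx ⊢
    rw [Pi.sub_apply, Pi.one_apply, ENNReal.mul_sub fun _ _ => hx_lt_top.ne, mul_one, hx, tsub_min]
  rw [P.withDensity_eq_singularPart_add ν (measurable_one.sub measurable_capFraction),
    withDensity_congr_ae h_sing, withDensity_one, withDensity_congr_ae h_ac]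

lemma map_snd_withDensity_comp_snd {β : Type*} [MeasurableSpace β] (π : Measure (β × α))
    {f : α → ℝ≥0∞} (hf : Measurable f) :
    (π.withDensity (f ∘ Prod.snd)).map Prod.snd = (π.map Prod.snd).withDensity f := by
  ext s hs
  rw [map_apply measurable_snd hs, withDensity_apply _ (measurable_snd hs), withDensity_apply _ hs,
    setLIntegral_map hs hf measurable_snd, Function.comp_def]

end MeasureTheory.Measure

lemma mem_feas_of_le {E : Set (X × Y)} {νX : Measure X} {νY : Measure Y} {t : ℝ}
    {π σ : Measure (X × Y)} (hπ : π ∈ Plans E νX) (hσπ : σ ≤ π)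
    (hσY : σ.map Prod.snd ≤ ENNReal.ofReal t • νY) : σ ∈ Feas E νX νY t :=
  have := hπ.1
  ⟨isFiniteMeasure_of_le π hσπ, Measure.absolutelyContinuous_of_le hσπ hπ.2.1,
    hπ.2.2 ▸ Measure.map_mono hσπ measurable_fst, hσY⟩

theorem overflow_decomposition_general
    (E : Set (X × Y))
    (νX : Measure X) (νY : Measure Y) [IsFiniteMeasure νY]
    (π : Measure (X × Y)) (hπ : π ∈ Plans E νX)
    (t : ℝ) :
    (∃ σt πov : Measure (X × Y),
        π = σt + πov ∧ σt ∈ Feas E νX νY t ∧ σt Eᶜ = 0 ∧ πov Eᶜ = 0 ∧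
        πov Set.univ = Overflow νY π t) ∧
      (∀ σ πov : Measure (X × Y),
        π = σ + πov → σ ∈ Feas E νX νY t → πov Set.univ = Overflow νY π t →
        σ.map Prod.snd
            = νY.withDensity (fun y => min ((π.map Prod.snd).rnDeriv νY y) (ENNReal.ofReal t)) ∧
          πov.map Prod.snd
            = (π.map Prod.snd).singularPart νY
                + νY.withDensity (fun y => (π.map Prod.snd).rnDeriv νY y - ENNReal.ofReal t)) := by
  have := hπ.1
  set P := π.map Prod.snd
  set f := P.capFraction νY (ENNReal.ofReal t)
  have hf : Measurable f := Measure.measurable_capFraction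
  set σt := π.withDensity (f ∘ Prod.snd)
  set πov := π.withDensity ((1 - f) ∘ Prod.snd)
  have h_split : σt + πov = π := π.withDensity_add_withDensity_one_sub (hf.comp measurable_snd)
    fun p => Measure.capFraction_le_one p.2
  have hσt_le : σt ≤ π := h_split ▸ Measure.le_add_right le_rfl
  have hπov_le : πov ≤ π := h_split ▸ Measure.le_add_left le_rfl
  have hσt : σt ∈ Feas E νX νY t := by
    refine mem_feas_of_le hπ hσt_le ?_
    rw [Measure.map_snd_withDensity_comp_snd π hf, Measure.withDensity_capFraction,
      ← withDensity_const]
    exact withDensity_mono (ae_of_all _ fun y => min_le_right _ _)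
  have h_mass : πov Set.univ = Overflow νY π t := by
    rw [← Measure.snd_univ, Measure.snd,
      Measure.map_snd_withDensity_comp_snd π (measurable_one.sub hf),
      Measure.withDensity_one_sub_capFraction, Measure.add_apply,
      withDensity_apply _ MeasurableSet.univ, Measure.restrict_univ, Overflow]
  refine ⟨⟨σt, πov, h_split.symm, hσt, hσt.2.1,
    Measure.absolutelyContinuous_of_le hπov_le hπ.2.1, h_mass⟩, ?_⟩
  intro σ πov' h_sum hσ h_mass'
  exact Measure.eq_withDensity_min_of_add_eq hσ.2.2.2
    (by rw [← Measure.map_add _ _ measurable_snd, ← h_sum]) (Measure.snd_univ.trans h_mass')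

theorem overflow_decomposition
    [TopologicalSpace X] [PolishSpace X] [BorelSpace X]
    [TopologicalSpace Y] [PolishSpace Y] [BorelSpace Y]
    (E : Set (X × Y)) (hE : IsClosed E)
    (νX : Measure X) (νY : Measure Y) [IsFiniteMeasure νX] [IsFiniteMeasure νY]
    (hνX : 0 < νX Set.univ) (hνY : 0 < νY Set.univ)
    (π : Measure (X × Y)) (hπ : π ∈ Plans E νX)
    (t : ℝ) (ht : 0 ≤ t) :
    (∃ σt πov : Measure (X × Y),
        π = σt + πov ∧ σt ∈ Feas E νX νY t ∧ σt Eᶜ = 0 ∧ πov Eᶜ = 0 ∧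
        πov Set.univ = Overflow νY π t) ∧
      (∀ σ πov : Measure (X × Y),
        π = σ + πov → σ ∈ Feas E νX νY t → πov Set.univ = Overflow νY π t →
        σ.map Prod.snd
            = νY.withDensity (fun y => min ((π.map Prod.snd).rnDeriv νY y) (ENNReal.ofReal t)) ∧
          πov.map Prod.snd
            = (π.map Prod.snd).singularPart νY
                + νY.withDensity (fun y => (π.map Prod.snd).rnDeriv νY y - ENNReal.ofReal t)) :=
  overflow_decomposition_general E νX νY π hπ t
end
end

section
/- Fix ι ∈ {0,1} and let φ : [0,∞) → ℝ be convex and lower semicontinuous with finite recession slope φ'_∞ := lim_{t→∞} φ(t)/t ∈ ℝ. Let φ'_+ denote the right derivative of φ and let μ_φ be the finite Borel measure on (0,∞) determined by μ_φ((a,b]) = φ'_+(b) − φ'_+(a) for 0 < a < b < ∞. Then for every π ∈ Π_ι, D_φ(ν_ῑ^{(π)}‖ν_ῑ) = φ(0)·ν_ῑ(Ω_ῑ) + φ'_+(0)·ν_ι(Ω_ι) + ∫_{(0,∞)} Over^π(t) dμ_φ(t); in particular the first two terms do not depend on π. -/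
/-!
Lower semicontinuity makes the convex function `φ` continuous on `[0, ∞)`, and finiteness of `μφ`
bounds its right derivative `φ'₊` from below near `0`; a squeeze of the secant slopes at `0` then
shows that `φ` is right-differentiable at `0` with `φ'₊(0) = lim_{x → 0⁺} φ'₊(x)`. Hence
`φ'₊(x) = φ'₊(0) + μφ (0, x]`, and the fundamental theorem of calculus for right derivatives
followed by Tonelli gives the Taylor formula `φ u = φ 0 + φ'₊(0) u + ∫ (u - t)₊ dμφ(t)` for `u ≥ 0`.
Dividing by `u` identifies the recession slope as `φ'₊(0) + μφ (0, ∞)`. For the opposite marginal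
`P = P_ac + P⊥` of `π` and `ν := ν_ῑ`, integrating the Taylor formula at `u = dP_ac/dν` against `ν`,
adding `φ'_∞ · P⊥(Ω_ῑ)`, using `P⊥(Ω_ῑ) + P_ac(Ω_ῑ) = P(Ω_ῑ) = ν_ι(Ω_ι)` and swapping the order
of integration once more gives the overflow form.
-/

open MeasureTheory ProbabilityTheory Filter
open scoped ENNReal NNReal

noncomputable section

/-- The nonnegative part of an extended real number, as an element of `ℝ≥0∞`. -/
def erealToENNReal (a : EReal) : ℝ≥0∞ :=
  if a = ⊤ then ⊤ else ENNReal.ofReal a.toReal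

/-- Extended-real integral via positive/negative parts. -/
def erealIntegral {Ω : Type} [MeasurableSpace Ω] (μ : Measure Ω) (f : Ω → EReal) : EReal :=
  ((∫⁻ x, erealToENNReal (f x) ∂μ : ℝ≥0∞) : EReal)
    - ((∫⁻ x, erealToENNReal (-f x) ∂μ : ℝ≥0∞) : EReal)

/-- Recession slope of `θ`, i.e. `lim_{t → ∞} θ t / t`. -/
def recessionSlope (θ : ℝ → EReal) : EReal :=
  Filter.limsup (fun t : ℝ => θ t * ((t⁻¹ : ℝ) : EReal)) Filter.atTop

/-- The `θ`-divergence `D_θ(P‖Q) = ∫ θ(dP_ac/dQ) dQ + θ'_∞ · P⊥(Ω)`. -/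
def thetaDiv {Ω : Type} [MeasurableSpace Ω] (θ : ℝ → EReal) (P Q : Measure Ω) : EReal :=
  erealIntegral Q (fun x => θ ((P.rnDeriv Q x).toReal))
    + recessionSlope θ * ((P.singularPart Q Set.univ : ℝ≥0∞) : EReal)

/-- Right derivative of a real function. -/
def rightDeriv (φ : ℝ → ℝ) (x : ℝ) : ℝ := derivWithin φ (Set.Ioi x) x

variable {X Y : Type} [MeasurableSpace X] [MeasurableSpace Y]

open Set Topology

theorem erealIntegral_coe {Ω : Type} [MeasurableSpace Ω] {μ : Measure Ω} {f : Ω → ℝ}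
    (hf : Integrable f μ) :
    erealIntegral μ (fun x => (f x : EReal)) = ((∫ x, f x ∂μ : ℝ) : EReal) := by
  have hpart : ∀ a : ℝ, erealToENNReal (a : EReal) = ENNReal.ofReal a := fun a => by
    rw [erealToENNReal, if_neg (EReal.coe_ne_top a), EReal.toReal_coe]
  simp only [erealIntegral, ← EReal.coe_neg, hpart]
  rw [integral_eq_lintegral_pos_part_sub_lintegral_neg_part hf, EReal.coe_sub,
    EReal.coe_ennreal_toReal hf.lintegral_lt_top.ne,
    EReal.coe_ennreal_toReal (hf.neg.lintegral_lt_top (f := fun x => -f x)).ne]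

theorem recessionSlope_coe {φ : ℝ → ℝ} {s : ℝ} (hs : Tendsto (fun t => φ t / t) atTop (𝓝 s)) :
    recessionSlope (fun u => (φ u : EReal)) = s := by
  refine Tendsto.limsup_eq ?_
  simp_rw [← EReal.coe_mul, ← div_eq_mul_inv]
  exact EReal.tendsto_coe.2 hs

theorem tendsto_measure_Ioc_nhdsGT (μ : Measure ℝ) [IsFiniteMeasure μ] (a : ℝ) :
    Tendsto (fun x => μ (Ioc a x)) (𝓝[>] a) (𝓝 0) := by
  have h := tendsto_measure_biInter_gt (μ := μ) (s := fun x => Ioc a x)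
    (fun _ _ => measurableSet_Ioc.nullMeasurableSet)
    (fun _ _ _ hij => Ioc_subset_Ioc_right hij) ⟨a + 1, by linarith, measure_ne_top _ _⟩
  have hempty : ⋂ x > a, Ioc a x = ∅ := by
    refine eq_empty_of_forall_notMem fun t ht => ?_
    simp only [mem_iInter, mem_Ioc] at ht
    obtain ⟨hat, -⟩ := ht (a + 1) (by linarith)
    linarith [(ht ((a + t) / 2) (by linarith)).2]
  rwa [hempty, measure_empty] at h

def hinge (μ : Measure ℝ) (u : ℝ) : ℝ≥0∞ :=
  ∫⁻ t in Ioi 0, (ENNReal.ofReal u - ENNReal.ofReal t) ∂μ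

section Hinge

variable (μ : Measure ℝ)

theorem hinge_mono : Monotone (hinge μ) := fun _ _ huv =>
  lintegral_mono fun _ => tsub_le_tsub_right (ENNReal.ofReal_le_ofReal huv) _

theorem hinge_le_mul (u : ℝ) : hinge μ u ≤ ENNReal.ofReal u * μ (Ioi 0) :=
  (lintegral_mono fun _ => tsub_le_self).trans_eq (setLIntegral_const _ _)

theorem hinge_lt_top [IsFiniteMeasure μ] (u : ℝ) : hinge μ u < ∞ :=
  (hinge_le_mul μ u).trans_lt (ENNReal.mul_lt_top ENNReal.ofReal_lt_top (measure_lt_top _ _))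

theorem setLIntegral_measure_Ioc_zero [SFinite μ] (u : ℝ) :
    ∫⁻ x in Ioc 0 u, μ (Ioc 0 x) = hinge μ u := by
  have hindicator : ∀ x, μ (Ioc 0 x) = ∫⁻ t in Ioi 0, (Iic x).indicator 1 t ∂μ := fun x => by
    rw [lintegral_indicator_one measurableSet_Iic, Measure.restrict_apply measurableSet_Iic,
      inter_comm, Ioi_inter_Iic]
  have hmeas : Measurable (Function.uncurry fun x t : ℝ => (Iic x).indicator (1 : ℝ → ℝ≥0∞) t) :=
    measurable_const.indicator (measurableSet_le measurable_snd measurable_fst)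
  simp_rw [hindicator]
  rw [lintegral_lintegral_swap hmeas.aemeasurable]
  refine setLIntegral_congr_fun measurableSet_Ioi fun t (ht : 0 < t) => ?_
  have hswap : ∀ x, (Iic x).indicator (1 : ℝ → ℝ≥0∞) t = (Ici t).indicator 1 x := fun x => by
    simp only [indicator_apply, mem_Iic, mem_Ici, Pi.one_apply]
  have hIcc : Ici t ∩ Ioc 0 u = Icc t u := by
    ext x
    simp only [mem_inter_iff, mem_Ici, mem_Ioc, mem_Icc]
    exact ⟨fun h => ⟨h.1, h.2.2⟩, fun h => ⟨h.1, ht.trans_le h.1, h.2⟩⟩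
  simp_rw [hswap]
  rw [lintegral_indicator_one measurableSet_Ici, Measure.restrict_apply measurableSet_Ici, hIcc,
    Real.volume_Icc, ENNReal.ofReal_sub u ht.le]

theorem tendsto_toReal_hinge_div_atTop [IsFiniteMeasure μ] :
    Tendsto (fun u => (hinge μ u).toReal / u) atTop (𝓝 (μ.real (Ioi 0))) := by
  have hfactor : ∀ u > 0,
      hinge μ u = ENNReal.ofReal u * ∫⁻ t in Ioi 0, ENNReal.ofReal (1 - t / u) ∂μ := by
    intro u hu
    rw [hinge, ← lintegral_const_mul' _ _ ENNReal.ofReal_ne_top]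
    refine setLIntegral_congr_fun measurableSet_Ioi fun t (ht : 0 < t) => ?_
    rw [← ENNReal.ofReal_mul hu.le, mul_one_sub, mul_div_cancel₀ _ hu.ne',
      ENNReal.ofReal_sub _ ht.le]
  have hlim : Tendsto (fun u => ∫⁻ t in Ioi 0, ENNReal.ofReal (1 - t / u) ∂μ) atTop
      (𝓝 (μ (Ioi 0))) := by
    have h := tendsto_lintegral_filter_of_dominated_convergence (μ := μ.restrict (Ioi 0))
      (l := atTop) (F := fun u t => ENNReal.ofReal (1 - t / u)) (f := fun _ => 1) (fun _ => 1)
      (Eventually.of_forall fun _ => by fun_prop)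
      (by
        filter_upwards [Ioi_mem_atTop 0] with u (hu : 0 < u)
        filter_upwards [ae_restrict_mem measurableSet_Ioi] with t (ht : 0 < t)
        exact ENNReal.ofReal_le_one.2 (by linarith [div_pos ht hu]))
      (by simp)
      (ae_of_all _ fun t => by
        simpa using ENNReal.tendsto_ofReal
          ((tendsto_const_nhds (x := (1 : ℝ))).sub (tendsto_const_nhds.div_atTop tendsto_id)))
    simpa using h
  refine ((ENNReal.tendsto_toReal (measure_ne_top μ _)).comp hlim).congr' ?_
  filter_upwards [Ioi_mem_atTop 0] with u (hu : 0 < u)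
  rw [Function.comp_apply, hfactor u hu, ENNReal.toReal_mul, ENNReal.toReal_ofReal hu.le,
    mul_div_cancel_left₀ _ hu.ne']

variable {Ω : Type} [MeasurableSpace Ω] {Q : Measure Ω} {f : Ω → ℝ}

theorem lintegral_hinge_comp [SFinite μ] [SFinite Q] (hf : Measurable f) :
    ∫⁻ y, hinge μ (f y) ∂Q
      = ∫⁻ t in Ioi 0, ∫⁻ y, (ENNReal.ofReal (f y) - ENNReal.ofReal t) ∂Q ∂μ :=
  lintegral_lintegral_swap ((ENNReal.measurable_ofReal.comp (hf.comp measurable_fst)).sub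
    (ENNReal.measurable_ofReal.comp measurable_snd)).aemeasurable

theorem integrable_toReal_hinge_comp [IsFiniteMeasure μ] (hf : Integrable f Q) :
    Integrable (fun y => (hinge μ (f y)).toReal) Q := by
  have hmeas := (hinge_mono μ).measurable.ennreal_toReal.comp_aemeasurable hf.aemeasurable
  refine (hf.norm.mul_const (μ.real (Ioi 0))).mono' hmeas.aestronglyMeasurable
    (ae_of_all _ fun y => ?_)
  rw [Real.norm_of_nonneg ENNReal.toReal_nonneg]
  calc (hinge μ (f y)).toReal ≤ (ENNReal.ofReal (f y) * μ (Ioi 0)).toReal :=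
        ENNReal.toReal_mono (ENNReal.mul_ne_top ENNReal.ofReal_ne_top (measure_ne_top _ _))
          (hinge_le_mul μ (f y))
    _ ≤ ‖f y‖ * μ.real (Ioi 0) := by
        rw [ENNReal.toReal_mul, ENNReal.toReal_ofReal', measureReal_def]
        gcongr
        exact max_le (Real.le_norm_self _) (norm_nonneg _)

end Hinge

def IsRightDerivMeasure (φ : ℝ → ℝ) (μ : Measure ℝ) : Prop :=
  ∀ a b : ℝ, 0 < a → a < b → μ (Ioc a b) = ENNReal.ofReal (rightDeriv φ b - rightDeriv φ a)

namespace ConvexOn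

variable {φ : ℝ → ℝ} {μ : Measure ℝ}

theorem continuousOn_Ici_of_lowerSemicontinuousOn
    (hconv : ConvexOn ℝ (Ici 0) φ) (hlsc : LowerSemicontinuousOn φ (Ici 0)) :
    ContinuousOn φ (Ici 0) := by
  intro x hx
  rcases (mem_Ici.mp hx).eq_or_lt with rfl | hx0
  · refine tendsto_order.2 ⟨fun m hm => hlsc 0 self_mem_Ici m hm, fun m hm => ?_⟩
    -- near `0`, convexity puts `φ` below its chord over `[0, 1]`, which is continuous
    have hchord : ContinuousAt (fun t : ℝ => (1 - t) * φ 0 + t * φ 1) 0 := by fun_prop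
    have hchord_lt : ∀ᶠ t in 𝓝 (0 : ℝ), (1 - t) * φ 0 + t * φ 1 < m :=
      hchord.eventually_lt_const (by simpa using hm)
    filter_upwards [eventually_nhdsWithin_of_eventually_nhds hchord_lt,
      eventually_nhdsWithin_of_eventually_nhds (eventually_lt_nhds one_pos),
      self_mem_nhdsWithin] with t hlt ht1 (ht0 : 0 ≤ t)
    calc φ t = φ ((1 - t) • 0 + t • 1) := by simp
      _ ≤ (1 - t) • φ 0 + t • φ 1 :=
        hconv.2 self_mem_Ici (mem_Ici.mpr zero_le_one) (by linarith) ht0 (by ring)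
      _ < m := hlt
  · have hinterior := hconv.continuousOn_interior
    rw [interior_Ici] at hinterior
    exact (hinterior.continuousAt (Ioi_mem_nhds hx0)).continuousWithinAt

theorem monotoneOn_rightDeriv_Ioi (hconv : ConvexOn ℝ (Ici 0) φ) :
    MonotoneOn (rightDeriv φ) (Ioi 0) := by
  have h := hconv.monotoneOn_rightDeriv
  rwa [interior_Ici] at h

theorem bddBelow_rightDeriv [IsFiniteMeasure μ] (hconv : ConvexOn ℝ (Ici 0) φ)
    (hμ : IsRightDerivMeasure φ μ) : BddBelow (rightDeriv φ '' Ioi 0) := by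
  refine ⟨rightDeriv φ 1 - μ.real univ, ?_⟩
  rintro _ ⟨a, (ha : 0 < a), rfl⟩
  rcases lt_or_ge a 1 with ha1 | ha1
  · have h := measureReal_mono (μ := μ) (subset_univ (Ioc a 1))
    rw [measureReal_def, hμ a 1 ha ha1, ENNReal.toReal_ofReal'] at h
    linarith [le_max_left (rightDeriv φ 1 - rightDeriv φ a) 0]
  · linarith [hconv.monotoneOn_rightDeriv_Ioi (mem_Ioi.mpr one_pos) (mem_Ioi.mpr ha) ha1,
      measureReal_nonneg (μ := μ) (s := univ)]

theorem tendsto_rightDeriv_nhdsGT_zero (hconv : ConvexOn ℝ (Ici 0) φ)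
    (hcont : ContinuousWithinAt φ (Ici 0) 0) (hbdd : BddBelow (rightDeriv φ '' Ioi 0)) :
    Tendsto (rightDeriv φ) (𝓝[>] 0) (𝓝 (rightDeriv φ 0)) := by
  set c := sInf (rightDeriv φ '' Ioi 0)
  have hlim : Tendsto (rightDeriv φ) (𝓝[>] 0) (𝓝 c) :=
    hconv.monotoneOn_rightDeriv_Ioi.tendsto_nhdsGT hbdd
  have hslope_ge : ∀ x ∈ Ioi (0 : ℝ), c ≤ slope φ 0 x := by
    intro x (hx : 0 < x)
    have hslope_cont : ContinuousWithinAt (fun y => slope φ y x) (Ioi 0) 0 := by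
      simp_rw [slope_def_field]
      exact (continuousWithinAt_const.sub (hcont.mono Ioi_subset_Ici_self)).div
        (continuousWithinAt_const.sub continuousWithinAt_id) (by simpa using hx.ne')
    refine ge_of_tendsto hslope_cont.tendsto ?_
    filter_upwards [Ioo_mem_nhdsGT hx] with y ⟨hy0, hyx⟩
    exact (csInf_le hbdd ⟨y, hy0, rfl⟩).trans
      (hconv.rightDeriv_le_slope_of_mem_interior (by simpa using hy0) hx.le hyx)
  have hslope_le : ∀ x ∈ Ioi (0 : ℝ), slope φ 0 x ≤ rightDeriv φ x := by
    intro x (hx : 0 < x)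
    have hx' : x ∈ interior (Ici (0 : ℝ)) := by simpa using hx
    exact (hconv.slope_le_leftDeriv_of_mem_interior self_mem_Ici hx' hx).trans
      (hconv.leftDeriv_le_rightDeriv_of_mem_interior hx')
  have hderiv : HasDerivWithinAt φ c (Ioi 0) 0 := by
    rw [hasDerivWithinAt_iff_tendsto_slope, sdiff_singleton_eq_self self_notMem_Ioi]
    exact tendsto_of_tendsto_of_tendsto_of_le_of_le' tendsto_const_nhds hlim
      (eventually_nhdsWithin_of_forall hslope_ge) (eventually_nhdsWithin_of_forall hslope_le)
  rwa [rightDeriv, hderiv.derivWithin (uniqueDiffWithinAt_Ioi 0)]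

theorem monotoneOn_rightDeriv_Ici (hconv : ConvexOn ℝ (Ici 0) φ)
    (hcont : ContinuousWithinAt φ (Ici 0) 0) (hbdd : BddBelow (rightDeriv φ '' Ioi 0)) :
    MonotoneOn (rightDeriv φ) (Ici 0) := by
  intro x (hx : 0 ≤ x) y (hy : 0 ≤ y) hxy
  rcases hx.eq_or_lt with rfl | hx
  · rcases hy.eq_or_lt with rfl | hy
    · rfl
    refine le_of_tendsto (hconv.tendsto_rightDeriv_nhdsGT_zero hcont hbdd) ?_
    filter_upwards [Ioo_mem_nhdsGT hy] with z ⟨hz, hzy⟩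
    exact hconv.monotoneOn_rightDeriv_Ioi hz hy hzy.le
  · exact hconv.monotoneOn_rightDeriv_Ioi hx (hx.trans_le hxy) hxy

variable [IsFiniteMeasure μ]

theorem measure_Ioc_zero_eq (hconv : ConvexOn ℝ (Ici 0) φ)
    (hcont : ContinuousWithinAt φ (Ici 0) 0) (hμ : IsRightDerivMeasure φ μ) {x : ℝ} (hx : 0 ≤ x) :
    μ (Ioc 0 x) = ENNReal.ofReal (rightDeriv φ x - rightDeriv φ 0) := by
  rcases hx.eq_or_lt with rfl | hx
  · simp
  have hsplit : ∀ᶠ a in 𝓝[>] 0,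
      μ (Ioc 0 a) + ENNReal.ofReal (rightDeriv φ x - rightDeriv φ a) = μ (Ioc 0 x) := by
    filter_upwards [Ioo_mem_nhdsGT hx] with a ⟨ha0, hax⟩
    rw [← hμ a x ha0 hax, ← measure_union (Ioc_disjoint_Ioc_of_le le_rfl) measurableSet_Ioc,
      Ioc_union_Ioc_eq_Ioc ha0.le hax.le]
  have hlim := (tendsto_measure_Ioc_nhdsGT μ 0).add (ENNReal.tendsto_ofReal
    ((tendsto_const_nhds (x := rightDeriv φ x)).sub
      (hconv.tendsto_rightDeriv_nhdsGT_zero hcont (hconv.bddBelow_rightDeriv hμ))))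
  rw [zero_add] at hlim
  exact tendsto_nhds_unique tendsto_const_nhds (hlim.congr' hsplit)

theorem eq_add_hinge (hconv : ConvexOn ℝ (Ici 0) φ) (hlsc : LowerSemicontinuousOn φ (Ici 0))
    (hμ : IsRightDerivMeasure φ μ) {u : ℝ} (hu : 0 ≤ u) :
    φ u = φ 0 + rightDeriv φ 0 * u + (hinge μ u).toReal := by
  have hcont := hconv.continuousOn_Ici_of_lowerSemicontinuousOn hlsc
  have hcont0 : ContinuousWithinAt φ (Ici 0) 0 := hcont 0 self_mem_Ici
  have hmono := hconv.monotoneOn_rightDeriv_Ici hcont0 (hconv.bddBelow_rightDeriv hμ)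
  have hIoc_mono : Monotone fun x => μ.real (Ioc 0 x) := fun _ _ hxy =>
    measureReal_mono (Ioc_subset_Ioc_right hxy) (measure_ne_top _ _)
  have hrightDeriv : ∀ x, 0 ≤ x → rightDeriv φ 0 + μ.real (Ioc 0 x) = rightDeriv φ x :=
    fun x hx => by
      rw [measureReal_def, hconv.measure_Ioc_zero_eq hcont0 hμ hx,
        ENNReal.toReal_ofReal (sub_nonneg.2 (hmono self_mem_Ici hx hx)), add_sub_cancel]
  have hftc := intervalIntegral.integral_eq_sub_of_hasDeriv_right_of_le
    (f' := fun x => rightDeriv φ 0 + μ.real (Ioc 0 x)) hu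
    (hcont.mono Icc_subset_Ici_self)
    (fun x hx => by
      rw [hrightDeriv x hx.1.le]
      exact hconv.hasDerivWithinAt_rightDeriv_of_mem_interior (by simpa using hx.1))
    (hIoc_mono.const_add _).intervalIntegrable
  have hhinge : ∫ x in (0 : ℝ)..u, μ.real (Ioc 0 x) = (hinge μ u).toReal := by
    rw [intervalIntegral.integral_of_le hu, ← setLIntegral_measure_Ioc_zero]
    exact integral_toReal
      (Monotone.measurable fun _ _ h => measure_mono (Ioc_subset_Ioc_right h)).aemeasurable
      (ae_of_all _ fun _ => measure_lt_top _ _)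
  rw [intervalIntegral.integral_add intervalIntegrable_const hIoc_mono.intervalIntegrable,
    intervalIntegral.integral_const, hhinge, smul_eq_mul, sub_zero] at hftc
  linarith

theorem tendsto_div_atTop (hconv : ConvexOn ℝ (Ici 0) φ) (hlsc : LowerSemicontinuousOn φ (Ici 0))
    (hμ : IsRightDerivMeasure φ μ) :
    Tendsto (fun u => φ u / u) atTop (𝓝 (rightDeriv φ 0 + μ.real (Ioi 0))) := by
  have h := ((tendsto_const_nhds (x := φ 0)).mul tendsto_inv_atTop_zero).add
    ((tendsto_const_nhds (x := rightDeriv φ 0)).add (tendsto_toReal_hinge_div_atTop μ))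
  rw [mul_zero, zero_add] at h
  refine h.congr' ?_
  filter_upwards [Ioi_mem_atTop 0] with u (hu : 0 < u)
  rw [hconv.eq_add_hinge hlsc hμ hu.le]
  field_simp
  ring

variable {Ω : Type} [MeasurableSpace Ω]

theorem integral_comp_eq_add_hinge (hconv : ConvexOn ℝ (Ici 0) φ)
    (hlsc : LowerSemicontinuousOn φ (Ici 0)) (hμ : IsRightDerivMeasure φ μ)
    {Q : Measure Ω} [IsFiniteMeasure Q] {f : Ω → ℝ} (hf0 : ∀ y, 0 ≤ f y) (hf : Integrable f Q) :
    Integrable (fun y => φ (f y)) Q ∧ ∫ y, φ (f y) ∂Q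
      = φ 0 * Q.real univ + rightDeriv φ 0 * ∫ y, f y ∂Q + (∫⁻ y, hinge μ (f y) ∂Q).toReal := by
  have hrepr : (fun y => φ (f y))
      = fun y => φ 0 + rightDeriv φ 0 * f y + (hinge μ (f y)).toReal :=
    funext fun y => hconv.eq_add_hinge hlsc hμ (hf0 y)
  have hlin : Integrable (fun y => φ 0 + rightDeriv φ 0 * f y) Q :=
    (integrable_const _).add (hf.const_mul _)
  have hhinge := integrable_toReal_hinge_comp μ hf
  rw [hrepr]
  refine ⟨hlin.add hhinge, ?_⟩
  rw [integral_add hlin hhinge, integral_add (integrable_const _) (hf.const_mul _), integral_const,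
    integral_const_mul, smul_eq_mul, mul_comm]
  congr 1
  exact integral_toReal ((hinge_mono μ).measurable.comp_aemeasurable hf.aemeasurable)
    (ae_of_all _ fun y => hinge_lt_top μ (f y))

theorem thetaDiv_eq_add_hinge
    (hconv : ConvexOn ℝ (Ici 0) φ) (hlsc : LowerSemicontinuousOn φ (Ici 0))
    (hμ : IsRightDerivMeasure φ μ) (P Q : Measure Ω) [IsFiniteMeasure P] [IsFiniteMeasure Q] :
    thetaDiv (fun u => ((φ u : ℝ) : EReal)) P Q
      = ((φ 0 : ℝ) : EReal) * ((Q univ : ℝ≥0∞) : EReal)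
        + ((rightDeriv φ 0 : ℝ) : EReal) * ((P univ : ℝ≥0∞) : EReal)
        + (((∫⁻ t in Ioi 0, (P.singularPart Q univ
            + ∫⁻ y, (P.rnDeriv Q y - ENNReal.ofReal t) ∂Q) ∂μ) : ℝ≥0∞) : EReal) := by
  set r := fun y => (P.rnDeriv Q y).toReal
  have hr_meas : Measurable r := (Measure.measurable_rnDeriv P Q).ennreal_toReal
  have hr : Integrable r Q := Measure.integrable_toReal_rnDeriv
  obtain ⟨hφr, hintegral⟩ :=
    hconv.integral_comp_eq_add_hinge hlsc hμ (fun _ => ENNReal.toReal_nonneg) hr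
  have hhinge : ∫⁻ y, hinge μ (r y) ∂Q ≠ ∞ :=
    (integrable_toReal_iff ((hinge_mono μ).measurable.comp hr_meas).aemeasurable
      (ae_of_all _ fun y => (hinge_lt_top μ (r y)).ne)).1 (integrable_toReal_hinge_comp μ hr)
  have hofReal : ∀ᵐ y ∂Q, ENNReal.ofReal (r y) = P.rnDeriv Q y :=
    (Measure.rnDeriv_lt_top P Q).mono fun y hy => ENNReal.ofReal_toReal hy.ne
  have hoverflow : ∫⁻ t in Ioi 0, (P.singularPart Q univ
      + ∫⁻ y, (P.rnDeriv Q y - ENNReal.ofReal t) ∂Q) ∂μ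
      = P.singularPart Q univ * μ (Ioi 0) + ∫⁻ y, hinge μ (r y) ∂Q := by
    rw [lintegral_add_left measurable_const, setLIntegral_const, lintegral_hinge_comp μ hr_meas]
    congr 1
    exact lintegral_congr fun t =>
      lintegral_congr_ae (hofReal.mono fun y hy => (congrArg (· - ENNReal.ofReal t) hy).symm)
  have hsingular_mul : P.singularPart Q univ * μ (Ioi 0) ≠ ∞ :=
    ENNReal.mul_ne_top (measure_ne_top _ _) (measure_ne_top _ _)
  rw [thetaDiv, erealIntegral_coe hφr, recessionSlope_coe (hconv.tendsto_div_atTop hlsc hμ),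
    hintegral, hoverflow, Measure.integral_toReal_rnDeriv',
    ← EReal.coe_ennreal_toReal (measure_ne_top Q univ),
    ← EReal.coe_ennreal_toReal (measure_ne_top P univ),
    ← EReal.coe_ennreal_toReal (measure_ne_top (P.singularPart Q) univ),
    ← EReal.coe_ennreal_toReal (ENNReal.add_ne_top.2 ⟨hsingular_mul, hhinge⟩)]
  norm_cast
  rw [ENNReal.toReal_add hsingular_mul hhinge, ENNReal.toReal_mul]
  simp only [measureReal_def]
  ring

end ConvexOn

theorem hinge_representation_of_divergence_general
    (E : Set (X × Y))
    (νX : Measure X) (νY : Measure Y) [IsFiniteMeasure νY]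
    (φ : ℝ → ℝ)
    (hconv : ConvexOn ℝ (Set.Ici 0) φ)
    (hlsc : LowerSemicontinuousOn φ (Set.Ici 0))
    (μφ : Measure ℝ) [IsFiniteMeasure μφ]
    (hμφ : ∀ a b : ℝ, 0 < a → a < b →
      μφ (Set.Ioc a b) = ENNReal.ofReal (rightDeriv φ b - rightDeriv φ a)) :
    ∀ π ∈ Plans E νX,
      thetaDiv (fun u => ((φ u : ℝ) : EReal)) (π.map Prod.snd) νY
        = ((φ 0 : ℝ) : EReal) * ((νY Set.univ : ℝ≥0∞) : EReal)
          + ((rightDeriv φ 0 : ℝ) : EReal) * ((νX Set.univ : ℝ≥0∞) : EReal)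
          + (((∫⁻ t in Set.Ioi (0 : ℝ), Overflow νY π t ∂μφ) : ℝ≥0∞) : EReal) := by
  rintro π ⟨hπ, -, hmarg⟩
  have hmass : π.map Prod.snd univ = νX univ := by
    rw [← hmarg, Measure.map_apply measurable_snd .univ, Measure.map_apply measurable_fst .univ]
    rfl
  rw [← hmass]
  exact hconv.thetaDiv_eq_add_hinge hlsc hμφ _ _

theorem hinge_representation_of_divergence
    [TopologicalSpace X] [PolishSpace X] [BorelSpace X]
    [TopologicalSpace Y] [PolishSpace Y] [BorelSpace Y]
    (E : Set (X × Y)) (hE : IsClosed E)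
    (νX : Measure X) (νY : Measure Y) [IsFiniteMeasure νX] [IsFiniteMeasure νY]
    (hνX : 0 < νX Set.univ) (hνY : 0 < νY Set.univ)
    (φ : ℝ → ℝ)
    (hconv : ConvexOn ℝ (Set.Ici 0) φ)
    (hlsc : LowerSemicontinuousOn φ (Set.Ici 0))
    (hslope : ∃ s : ℝ, Filter.Tendsto (fun t : ℝ => φ t / t) Filter.atTop (nhds s))
    (μφ : Measure ℝ) [IsFiniteMeasure μφ]
    (hμφ_carried : μφ (Set.Ioi (0 : ℝ))ᶜ = 0)
    (hμφ : ∀ a b : ℝ, 0 < a → a < b →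
      μφ (Set.Ioc a b) = ENNReal.ofReal (rightDeriv φ b - rightDeriv φ a)) :
    ∀ π ∈ Plans E νX,
      thetaDiv (fun u => ((φ u : ℝ) : EReal)) (π.map Prod.snd) νY
        = ((φ 0 : ℝ) : EReal) * ((νY Set.univ : ℝ≥0∞) : EReal)
          + ((rightDeriv φ 0 : ℝ) : EReal) * ((νX Set.univ : ℝ≥0∞) : EReal)
          + (((∫⁻ t in Set.Ioi (0 : ℝ), Overflow νY π t ∂μφ) : ℝ≥0∞) : EReal) :=
  hinge_representation_of_divergence_general E νX νY φ hconv hlsc μφ hμφ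
end
end

section
/- Let (Ω0, Σ0) and (Ω1, Σ1) be measurable spaces, fix ι ∈ {0,1} and write ῑ := 1 − ι, let b be a finite measure on Ω_ῑ, and let σ, σ0 be finite measures on Ω0 × Ω1. Write ξ, ξ0 for the Ω_ι-marginals and ψ, ψ0 for the Ω_ῑ-marginals of σ, σ0, and assume ψ ≤ b, ψ0 ≤ b, and σ(Ω0 × Ω1) > σ0(Ω0 × Ω1). Let L := {y ∈ Ω_ῑ : (dψ0/db)(y) < 1}. Then there exist finite measures γ ≤ σ and γ0 ≤ σ0 on Ω0 × Ω1 with Ω_ι-marginals α, α0 and Ω_ῑ-marginals β, β0 such that: (i) α0 ≤ α and 0 ≠ α − α0 ≤ (ξ − ξ0)⁺, the positive part of the Jordan decomposition of ξ − ξ0; (ii) β0 ≤ β, the measure β − β0 is nonzero, and (β − β0)(Lᶜ) = 0; (iii) ψ0 − β0 + β ≤ b. -/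
/-!
Grow layers `B₀ ⊆ B₁ ⊆ ⋯` of `Y`, starting from `B₀ = L`, where `ψ0` still has room below `b`:
`Aₖ` is the set of points of `X` from which `σ` charges `Bₖ`, and `Bₖ₊₁` adds to `Bₖ` the points
that `σ0` reaches from `Aₖ`. If the surplus `(ξ - ξ0)⁺` charged no `Aₖ`, then `A = ⋃ Aₖ` and
`B = ⋃ Bₖ` would form a cut: `σ` carries nothing from `Aᶜ` into `B`, `σ0` carries nothing from `A`
into `Bᶜ`, and `ψ ≤ b ≤ ψ0` on `Bᶜ ⊆ Lᶜ`; adding up gives `σ(X × Y) ≤ σ0(X × Y)`.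

So some surplus sits on some `Aₖ`, and it is routed along an alternating path: pushed forward along
`σ` into `Bₖ`, the part landing in `L` is absorbed by the slack `b - ψ0`, and the part landing among
the points that `σ0` reaches from some `Aⱼ` (`j < k`) is pulled back along `σ0` to `Aⱼ`, where
induction on `k` applies. Every step lifts a sub-measure of a marginal to a sub-measure of the plan
by a density depending on one coordinate only.
-/

open MeasureTheory
open scoped ENNReal

noncomputable section

namespace MeasureTheory.Measure

variable {α β : Type*} [MeasurableSpace α] [MeasurableSpace β]

theorem map_withDensity_comp (μ : Measure α) {f : α → β} (hf : Measurable f) {g : β → ℝ≥0∞}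
    (hg : Measurable g) : (μ.withDensity (g ∘ f)).map f = (μ.map f).withDensity g := by
  ext s hs
  rw [map_apply hf hs, withDensity_apply _ (hf hs), withDensity_apply _ hs,
    setLIntegral_map hs hg hf]
  rfl

theorem exists_le_map_eq_of_le_map {μ : Measure α} [IsFiniteMeasure μ] {f : α → β}
    (hf : Measurable f) {ν : Measure β} (hν : ν ≤ μ.map f) : ∃ γ ≤ μ, γ.map f = ν := by
  have : IsFiniteMeasure ν := isFiniteMeasure_of_le _ hν
  let d : β → ℝ≥0∞ := fun y ↦ min 1 (ν.rnDeriv (μ.map f) y)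
  have hd_eq : d =ᵐ[μ.map f] ν.rnDeriv (μ.map f) := by
    filter_upwards [rnDeriv_le_one_of_le hν] with y hy using min_eq_right hy
  refine ⟨μ.withDensity (d ∘ f), ?_, ?_⟩
  · calc μ.withDensity (d ∘ f) ≤ μ.withDensity 1 :=
          withDensity_mono (ae_of_all _ fun _ ↦ min_le_left _ _)
      _ = μ := withDensity_one
  · rw [map_withDensity_comp μ hf (measurable_const.min (measurable_rnDeriv _ _)),
      withDensity_congr_ae hd_eq, withDensity_rnDeriv_eq _ _ (absolutelyContinuous_of_le hν)]

theorem exists_ne_zero_le_le_of_absolutelyContinuous {μ ν : Measure α} [SigmaFinite μ]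
    [SigmaFinite ν] (hνμ : ν ≪ μ) (hν : ν ≠ 0) : ∃ θ, θ ≠ 0 ∧ θ ≤ ν ∧ θ ≤ μ := by
  have hd : Measurable fun x ↦ min 1 (ν.rnDeriv μ x) :=
    measurable_const.min (measurable_rnDeriv _ _)
  refine ⟨μ.withDensity fun x ↦ min 1 (ν.rnDeriv μ x), ?_, ?_, ?_⟩
  · rw [Ne, withDensity_eq_zero_iff hd.aemeasurable]
    refine fun h ↦ hν ?_
    rw [← withDensity_rnDeriv_eq ν μ hνμ, withDensity_eq_zero_iff (by fun_prop)]
    filter_upwards [h] with x hx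
    simpa using hx
  · calc _ ≤ μ.withDensity (ν.rnDeriv μ) := withDensity_mono (ae_of_all _ fun _ ↦ min_le_right _ _)
      _ = ν := withDensity_rnDeriv_eq ν μ hνμ
  · calc _ ≤ μ.withDensity 1 := withDensity_mono (ae_of_all _ fun _ ↦ min_le_left _ _)
      _ = μ := withDensity_one

def posSet (m Ω : Measure α) : Set α := {x | 0 < m.rnDeriv Ω x}

theorem measurableSet_posSet (m Ω : Measure α) : MeasurableSet (posSet m Ω) :=
  measurableSet_lt measurable_const (measurable_rnDeriv _ _)

theorem measure_compl_posSet {m Ω : Measure α} [SigmaFinite m] [SigmaFinite Ω] (h : m ≪ Ω) :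
    m (posSet m Ω)ᶜ = 0 :=
  ae_iff.mp (rnDeriv_pos h)

theorem restrict_absolutelyContinuous_of_subset_posSet {m Ω ν : Measure α} {s : Set α}
    (hs : s ⊆ posSet m Ω) (hν : ν ≪ Ω) : ν.restrict s ≪ m := by
  have hP := measurableSet_posSet m Ω
  have hΩ : Ω.restrict (posSet m Ω) ≪ m := by
    refine (withDensity_absolutelyContinuous' (f := m.rnDeriv Ω) (by fun_prop)
      (ae_restrict_of_forall_mem hP fun x hx ↦ hx.ne')).trans ?_
    rw [← restrict_withDensity hP]
    exact absolutelyContinuous_of_le (restrict_le_self.trans (withDensity_rnDeriv_le m Ω))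
  exact (absolutelyContinuous_of_le (restrict_mono hs le_rfl)).trans ((hν.restrict _).trans hΩ)

theorem measure_preimage_compl_posSet_inter {γ : Type*} [MeasurableSpace γ] {μ : Measure γ}
    [IsFiniteMeasure μ] {f : γ → α} (hf : Measurable f) (t : Set γ) {Ω : Measure α} [SigmaFinite Ω]
    (h : (μ.restrict t).map f ≪ Ω) :
    μ (f ⁻¹' (posSet ((μ.restrict t).map f) Ω)ᶜ ∩ t) = 0 := by
  rw [← restrict_apply (hf (measurableSet_posSet _ _).compl), ← map_apply hf
    (measurableSet_posSet _ _).compl]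
  exact measure_compl_posSet h

theorem smul_le_self_of_le_one {c : ℝ≥0∞} (hc : c ≤ 1) (μ : Measure α) : c • μ ≤ μ := fun s ↦ by
  simpa using mul_le_of_le_one_left zero_le hc

theorem inv_two_smul_add_le {μ₁ μ₂ μ : Measure α} (h₁ : μ₁ ≤ μ) (h₂ : μ₂ ≤ μ) :
    (2 : ℝ≥0∞)⁻¹ • (μ₁ + μ₂) ≤ μ := fun s ↦ by
  calc ((2 : ℝ≥0∞)⁻¹ • (μ₁ + μ₂)) s = 2⁻¹ * (μ₁ s + μ₂ s) := rfl
    _ ≤ 2⁻¹ * (μ s + μ s) := by gcongr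
    _ = μ s := by
      rw [← two_mul, ← mul_assoc, ENNReal.inv_mul_cancel two_ne_zero ENNReal.ofNat_ne_top, one_mul]

theorem map_apply_univ {μ : Measure α} {f : α → β} (hf : Measurable f) :
    μ.map f Set.univ = μ Set.univ := by
  rw [map_apply hf .univ, Set.preimage_univ]

theorem sub_ne_zero_of_measure_univ_lt {μ ν : Measure α} [IsFiniteMeasure μ] [IsFiniteMeasure ν]
    (h : ν Set.univ < μ Set.univ) : μ - ν ≠ 0 :=
  fun h0 ↦ ((sub_le_iff_le_add.mp h0.le) Set.univ).not_gt (by simpa using h)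

theorem measure_ne_zero_of_le_restrict {μ ν : Measure α} {s : Set α} (hs : MeasurableSet s)
    (h : μ ≤ ν.restrict s) (hμ : μ ≠ 0) : μ s ≠ 0 := by
  refine fun h0 ↦ hμ (measure_univ_eq_zero.mp (le_antisymm ?_ zero_le))
  calc μ Set.univ ≤ μ s + μ sᶜ := measure_univ_le_add_compl s
    _ ≤ 0 + ν.restrict s sᶜ := add_le_add h0.le (h _)
    _ = 0 := by simp [restrict_apply hs.compl]

theorem measure_univ_le_of_cut {σ σ0 : Measure (α × β)} {A : Set α} {B : Set β}
    (hA : MeasurableSet A) (hB : MeasurableSet B)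
    (hσ : σ (Prod.fst ⁻¹' Aᶜ ∩ Prod.snd ⁻¹' B) = 0)
    (hσ0 : σ0 (Prod.fst ⁻¹' A ∩ Prod.snd ⁻¹' Bᶜ) = 0)
    (hfst : σ.map Prod.fst A ≤ σ0.map Prod.fst A)
    (hsnd : σ.map Prod.snd Bᶜ ≤ σ0.map Prod.snd Bᶜ) : σ Set.univ ≤ σ0 Set.univ := by
  rw [map_apply measurable_fst hA, map_apply measurable_fst hA] at hfst
  rw [map_apply measurable_snd hB.compl, map_apply measurable_snd hB.compl] at hsnd
  have hcover : Set.univ ⊆ Prod.fst ⁻¹' A ∪ (Prod.fst ⁻¹' Aᶜ ∩ Prod.snd ⁻¹' B) ∪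
      Prod.snd ⁻¹' Bᶜ := by
    rintro ⟨x, y⟩ -
    by_cases hx : x ∈ A <;> by_cases hy : y ∈ B <;> simp [hx, hy]
  calc σ Set.univ
      ≤ σ (Prod.fst ⁻¹' A) + σ (Prod.fst ⁻¹' Aᶜ ∩ Prod.snd ⁻¹' B) + σ (Prod.snd ⁻¹' Bᶜ) :=
        (measure_mono hcover).trans
          ((measure_union_le _ _).trans (add_le_add_left (measure_union_le _ _) _))
    _ ≤ σ0 (Prod.fst ⁻¹' A) + σ0 (Prod.snd ⁻¹' Bᶜ) := by rw [hσ, add_zero]; gcongr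
    _ = σ0 (Prod.fst ⁻¹' A ∩ Prod.snd ⁻¹' B) + σ0 (Prod.snd ⁻¹' Bᶜ) := by
        rw [← measure_inter_add_sdiff _ (measurable_snd hB), Set.sdiff_eq, ← Set.preimage_compl,
          hσ0, add_zero]
    _ ≤ σ0 (Prod.snd ⁻¹' B) + σ0 (Prod.snd ⁻¹' Bᶜ) := by gcongr; exact Set.inter_subset_right
    _ = σ0 Set.univ := measure_add_measure_compl (measurable_snd hB)

section Slack

variable {μ ν : Measure α} [SigmaFinite μ] [IsFiniteMeasure ν]

theorem sub_eq_withDensity_one_sub_rnDeriv (h : ν ≪ μ) :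
    μ - ν = μ.withDensity (1 - ν.rnDeriv μ) := by
  have : IsFiniteMeasure (μ.withDensity (ν.rnDeriv μ)) := by
    rw [withDensity_rnDeriv_eq ν μ h]; infer_instance
  rw [withDensity_sub measurable_one (measurable_rnDeriv _ _), withDensity_one,
    withDensity_rnDeriv_eq ν μ h]

theorem sub_apply_setOf_one_le_rnDeriv (h : ν ≪ μ) : (μ - ν) {x | 1 ≤ ν.rnDeriv μ x} = 0 := by
  have hM : MeasurableSet {x | 1 ≤ ν.rnDeriv μ x} :=
    measurableSet_le measurable_const (measurable_rnDeriv _ _)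
  rw [sub_eq_withDensity_one_sub_rnDeriv h, withDensity_apply _ hM]
  exact setLIntegral_eq_zero hM fun x hx ↦ tsub_eq_zero_of_le hx

theorem restrict_setOf_rnDeriv_lt_one_absolutelyContinuous_sub (h : ν ≪ μ) :
    μ.restrict {x | ν.rnDeriv μ x < 1} ≪ μ - ν := by
  have hL : MeasurableSet {x | ν.rnDeriv μ x < 1} :=
    measurableSet_lt (measurable_rnDeriv _ _) measurable_const
  rw [sub_eq_withDensity_one_sub_rnDeriv h]
  refine (withDensity_absolutelyContinuous' (f := 1 - ν.rnDeriv μ) (by fun_prop)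
    (ae_restrict_of_forall_mem hL fun x hx ↦ (tsub_pos_of_lt hx).ne')).trans ?_
  rw [← restrict_withDensity hL]
  exact absolutelyContinuous_of_le restrict_le_self

theorem restrict_setOf_one_le_rnDeriv_le (h : ν ≪ μ) :
    μ.restrict {x | 1 ≤ ν.rnDeriv μ x} ≤ ν.restrict {x | 1 ≤ ν.rnDeriv μ x} := by
  set M := {x | 1 ≤ ν.rnDeriv μ x}
  have hM : MeasurableSet M := measurableSet_le measurable_const (measurable_rnDeriv _ _)
  conv_rhs => rw [← withDensity_rnDeriv_eq ν μ h, restrict_withDensity hM]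
  calc μ.restrict M = (μ.restrict M).withDensity 1 := withDensity_one.symm
    _ ≤ _ := withDensity_mono (ae_restrict_of_forall_mem hM fun x hx ↦ hx)

end Slack

end MeasureTheory.Measure

namespace AugmentingSubplan

open Measure

variable {X Y : Type*} [MeasurableSpace X] [MeasurableSpace Y]

section Layers

variable (σ σ0 : Measure (X × Y))

/- Densities are taken against the marginals of `σ + σ0`, which dominate those of `σ` and `σ0`. -/
def sourceOf (B : Set Y) : Set X :=
  posSet ((σ.restrict (Prod.snd ⁻¹' B)).map Prod.fst) ((σ + σ0).map Prod.fst)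

def targetOf (A : Set X) : Set Y :=
  posSet ((σ0.restrict (Prod.fst ⁻¹' A)).map Prod.snd) ((σ + σ0).map Prod.snd)

def layer (L : Set Y) : ℕ → Set Y
  | 0 => L
  | k + 1 => layer L k ∪ targetOf σ σ0 (sourceOf σ σ0 (layer L k))

theorem measurableSet_layer {L : Set Y} (hL : MeasurableSet L) :
    ∀ k, MeasurableSet (layer σ σ0 L k)
  | 0 => hL
  | k + 1 => (measurableSet_layer hL k).union (measurableSet_posSet _ _)

theorem measure_layer_ne_zero {L : Set Y} (ν : Measure Y) {k : ℕ}
    (h : ν (layer σ σ0 L k) ≠ 0) :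
    ν L ≠ 0 ∨ ∃ j < k, ν (targetOf σ σ0 (sourceOf σ σ0 (layer σ σ0 L j))) ≠ 0 := by
  induction k with
  | zero => exact Or.inl h
  | succ k ih =>
    by_cases hk : ν (targetOf σ σ0 (sourceOf σ σ0 (layer σ σ0 L k))) = 0
    · have : ν (layer σ σ0 L k) ≠ 0 := fun h0 ↦
        h (measure_union_null h0 hk)
      exact (ih this).imp_right fun ⟨j, hj, hj0⟩ ↦ ⟨j, hj.trans (Nat.lt_succ_self k), hj0⟩
    · exact Or.inr ⟨k, Nat.lt_succ_self k, hk⟩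

variable [IsFiniteMeasure σ] [IsFiniteMeasure σ0]

theorem measure_compl_sourceOf_inter (B : Set Y) :
    σ (Prod.fst ⁻¹' (sourceOf σ σ0 B)ᶜ ∩ Prod.snd ⁻¹' B) = 0 :=
  measure_preimage_compl_posSet_inter measurable_fst _ <| absolutelyContinuous_of_le <|
    map_mono (restrict_le_self.trans (Measure.le_add_right le_rfl)) measurable_fst

theorem measure_compl_targetOf_inter (A : Set X) :
    σ0 (Prod.snd ⁻¹' (targetOf σ σ0 A)ᶜ ∩ Prod.fst ⁻¹' A) = 0 :=
  measure_preimage_compl_posSet_inter measurable_snd _ <| absolutelyContinuous_of_le <|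
    map_mono (restrict_le_self.trans (Measure.le_add_left le_rfl)) measurable_snd

theorem exists_sub_apply_sourceOf_layer_ne_zero {L : Set Y} (hL : MeasurableSet L)
    (hsat : (σ.map Prod.snd).restrict Lᶜ ≤ (σ0.map Prod.snd).restrict Lᶜ)
    (hmass : σ0 Set.univ < σ Set.univ) :
    ∃ k, (σ.map Prod.fst - σ0.map Prod.fst) (sourceOf σ σ0 (layer σ σ0 L k)) ≠ 0 := by
  by_contra! h
  set A := ⋃ k, sourceOf σ σ0 (layer σ σ0 L k)
  set B := ⋃ k, layer σ σ0 L k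
  have hB : MeasurableSet B := .iUnion (measurableSet_layer σ σ0 hL)
  have hA : MeasurableSet A := .iUnion fun _ ↦ measurableSet_posSet _ _
  refine hmass.not_ge (measure_univ_le_of_cut hA hB ?_ ?_ ?_ ?_)
  · refine measure_mono_null ?_ (measure_iUnion_null fun k ↦
      measure_compl_sourceOf_inter σ σ0 (layer σ σ0 L k))
    rintro ⟨x, y⟩ ⟨hx, hy⟩
    obtain ⟨k, hk⟩ := Set.mem_iUnion.mp hy
    exact Set.mem_iUnion.mpr ⟨k, fun hxk ↦ hx (Set.mem_iUnion.mpr ⟨k, hxk⟩), hk⟩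
  · refine measure_mono_null ?_ (measure_iUnion_null fun k ↦
      measure_compl_targetOf_inter σ σ0 (sourceOf σ σ0 (layer σ σ0 L k)))
    rintro ⟨x, y⟩ ⟨hx, hy⟩
    obtain ⟨k, hk⟩ := Set.mem_iUnion.mp hx
    exact Set.mem_iUnion.mpr ⟨k, fun hyk ↦ hy (Set.mem_iUnion.mpr ⟨k + 1, Or.inr hyk⟩), hk⟩
  · have hA0 : (σ.map Prod.fst - σ0.map Prod.fst) A = 0 := measure_iUnion_null h
    have hle : σ.map Prod.fst ≤ (σ.map Prod.fst - σ0.map Prod.fst) + σ0.map Prod.fst :=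
      Measure.sub_le_iff_le_add.mp le_rfl
    simpa [hA0] using hle A
  · have hBL : Bᶜ ⊆ Lᶜ := Set.compl_subset_compl.mpr (Set.subset_iUnion (layer σ σ0 L) 0)
    have := hsat Bᶜ
    rwa [restrict_apply hB.compl, restrict_apply hB.compl, Set.inter_eq_left.mpr hBL] at this

end Layers

structure IsAugmenting (σ σ0 : Measure (X × Y)) (ρ : Measure X) (κ : Measure Y)
    (γ γ0 : Measure (X × Y)) : Prop where
  le : γ ≤ σ
  le0 : γ0 ≤ σ0
  map_fst_le : γ0.map Prod.fst ≤ γ.map Prod.fst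
  map_fst_le_add : γ.map Prod.fst ≤ γ0.map Prod.fst + ρ
  map_snd_le : γ0.map Prod.snd ≤ γ.map Prod.snd
  map_snd_le_add : γ.map Prod.snd ≤ γ0.map Prod.snd + κ
  measure_univ_lt : γ0 Set.univ < γ Set.univ

variable {σ σ0 : Measure (X × Y)} {ρ θ : Measure X} {κ : Measure Y}
  {γ γ0 fwd back : Measure (X × Y)}

theorem IsAugmenting.map_fst_sub_le (h : IsAugmenting σ σ0 ρ κ γ γ0) :
    γ.map Prod.fst - γ0.map Prod.fst ≤ ρ :=
  sub_le_of_le_add (h.map_fst_le_add.trans_eq (add_comm _ _))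

theorem IsAugmenting.map_snd_sub_le (h : IsAugmenting σ σ0 ρ κ γ γ0) :
    γ.map Prod.snd - γ0.map Prod.snd ≤ κ :=
  sub_le_of_le_add (h.map_snd_le_add.trans_eq (add_comm _ _))

/- `fwd` and `γ` may overlap inside `σ`, and `back` and `γ0` inside `σ0`, hence the average. -/

theorem IsAugmenting.half_add [IsFiniteMeasure back]
    (h : IsAugmenting σ σ0 θ κ γ γ0) (hfwd : fwd ≤ σ) (hback : back ≤ σ0)
    (hsnd : fwd.map Prod.snd = back.map Prod.snd)
    (hfst : back.map Prod.fst + γ0.map Prod.fst = γ.map Prod.fst)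
    (hρ : fwd.map Prod.fst ≤ ρ) :
    IsAugmenting σ σ0 ρ κ ((2 : ℝ≥0∞)⁻¹ • (fwd + γ)) ((2 : ℝ≥0∞)⁻¹ • (back + γ0)) where
  le := inv_two_smul_add_le hfwd h.le
  le0 := inv_two_smul_add_le hback h.le0
  map_fst_le := by
    simp only [Measure.map_smul, Measure.map_add _ _ measurable_fst, hfst]
    gcongr
    exact Measure.le_add_left le_rfl
  map_fst_le_add := by
    rw [Measure.map_smul, Measure.map_smul, Measure.map_add _ _ measurable_fst,
      Measure.map_add _ _ measurable_fst, hfst, smul_add, add_comm]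
    gcongr
    exact (smul_le_self_of_le_one (by norm_num) _).trans hρ
  map_snd_le := by
    simp only [Measure.map_smul, Measure.map_add _ _ measurable_snd, hsnd]
    gcongr 2⁻¹ • (_ + ?_)
    exact h.map_snd_le
  map_snd_le_add := by
    simp only [Measure.map_smul, Measure.map_add _ _ measurable_snd, hsnd, smul_add, add_assoc]
    gcongr
    calc (2 : ℝ≥0∞)⁻¹ • γ.map Prod.snd ≤ (2 : ℝ≥0∞)⁻¹ • (γ0.map Prod.snd + κ) := by
          gcongr; exact h.map_snd_le_add
      _ ≤ (2 : ℝ≥0∞)⁻¹ • γ0.map Prod.snd + κ := by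
          rw [smul_add]; gcongr; exact smul_le_self_of_le_one (by norm_num) _
  measure_univ_lt := by
    have hmass : fwd Set.univ = back Set.univ := by
      rw [← map_apply_univ measurable_snd, hsnd, map_apply_univ measurable_snd]
    simp only [Measure.smul_apply, Measure.add_apply, smul_eq_mul, hmass]
    gcongr
    · simp
    · simp
    · exact measure_ne_top back _
    · exact h.measure_univ_lt

variable [IsFiniteMeasure σ] [IsFiniteMeasure σ0]

theorem IsAugmenting.map_sub_map_ne_zero (h : IsAugmenting σ σ0 ρ κ γ γ0) {Z : Type*}
    [MeasurableSpace Z] {f : X × Y → Z} (hf : Measurable f) : γ.map f - γ0.map f ≠ 0 := by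
  have : IsFiniteMeasure γ := isFiniteMeasure_of_le σ h.le
  have : IsFiniteMeasure γ0 := isFiniteMeasure_of_le σ0 h.le0
  apply sub_ne_zero_of_measure_univ_lt
  rw [map_apply_univ hf, map_apply_univ hf]
  exact h.measure_univ_lt

theorem IsAugmenting.extend (h : IsAugmenting σ σ0 θ κ γ γ0) (hfwd : fwd ≤ σ)
    (hback : back ≤ σ0) (hθ : θ ≤ back.map Prod.fst)
    (hsnd : back.map Prod.snd ≤ fwd.map Prod.snd) :
    ∃ γ' γ0', IsAugmenting σ σ0 (fwd.map Prod.fst) κ γ' γ0' := by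
  have : IsFiniteMeasure fwd := isFiniteMeasure_of_le σ hfwd
  have : IsFiniteMeasure back := isFiniteMeasure_of_le σ0 hback
  have : IsFiniteMeasure γ0 := isFiniteMeasure_of_le σ0 h.le0
  obtain ⟨back', hback', hback'_fst⟩ :=
    exists_le_map_eq_of_le_map measurable_fst (h.map_fst_sub_le.trans hθ)
  obtain ⟨fwd', hfwd', hfwd'_snd⟩ := exists_le_map_eq_of_le_map measurable_snd
    ((map_mono hback' measurable_snd).trans hsnd)
  have : IsFiniteMeasure back' := isFiniteMeasure_of_le back hback'
  exact ⟨_, _, h.half_add (hfwd'.trans hfwd) (hback'.trans hback) hfwd'_snd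
    (by rw [hback'_fst, sub_add_cancel_of_le h.map_fst_le]) (map_mono hfwd' measurable_fst)⟩

omit [IsFiniteMeasure σ0] in
theorem exists_isAugmenting_of_absorb [IsFiniteMeasure κ] {L : Set Y}
    (hL : (σ.map Prod.snd).restrict L ≪ κ) (hfwd : fwd ≤ σ) (hτ : fwd.map Prod.snd L ≠ 0) :
    ∃ γ γ0, IsAugmenting σ σ0 (fwd.map Prod.fst) κ γ γ0 := by
  have : IsFiniteMeasure fwd := isFiniteMeasure_of_le σ hfwd
  obtain ⟨θ, hθ0, hθτ, hθκ⟩ := exists_ne_zero_le_le_of_absolutelyContinuous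
    ((absolutelyContinuous_of_le
      (restrict_mono subset_rfl (map_mono hfwd measurable_snd))).trans hL)
    (by rwa [Ne, restrict_eq_zero])
  obtain ⟨γ, hγ, hγ_snd⟩ := exists_le_map_eq_of_le_map measurable_snd (hθτ.trans restrict_le_self)
  refine ⟨γ, 0, hγ.trans hfwd, Measure.zero_le _, ?_, ?_, ?_, ?_, ?_⟩ <;>
    simp only [Measure.map_zero, zero_add, Measure.coe_zero, Pi.zero_apply]
  · exact Measure.zero_le _
  · exact map_mono hγ measurable_fst
  · exact Measure.zero_le _
  · exact hγ_snd ▸ hθκ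
  · rw [pos_iff_ne_zero, ← map_apply_univ measurable_snd, hγ_snd, Ne, measure_univ_eq_zero]
    exact hθ0

theorem exists_isAugmenting_of_bounce {B : Set Y}
    (IH : ∀ θ, θ ≠ 0 → θ ≤ (σ.restrict (Prod.snd ⁻¹' B)).map Prod.fst →
      ∃ γ γ0, IsAugmenting σ σ0 θ κ γ γ0)
    (hfwd : fwd ≤ σ) (hτ : fwd.map Prod.snd (targetOf σ σ0 (sourceOf σ σ0 B)) ≠ 0) :
    ∃ γ γ0, IsAugmenting σ σ0 (fwd.map Prod.fst) κ γ γ0 := by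
  set A := sourceOf σ σ0 B
  have hA : MeasurableSet A := measurableSet_posSet _ _
  have : IsFiniteMeasure fwd := isFiniteMeasure_of_le σ hfwd
  obtain ⟨η, hη0, hητ, hηκ⟩ := exists_ne_zero_le_le_of_absolutelyContinuous
    (restrict_absolutelyContinuous_of_subset_posSet subset_rfl (absolutelyContinuous_of_le
      (map_mono (hfwd.trans (Measure.le_add_right le_rfl)) measurable_snd)))
    (by rwa [Ne, restrict_eq_zero])
  obtain ⟨back, hback, hback_snd⟩ := exists_le_map_eq_of_le_map measurable_snd hηκ
  have : IsFiniteMeasure back := isFiniteMeasure_of_le _ hback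
  have hback0 : back ≠ 0 := by rintro rfl; simp [← hback_snd] at hη0
  have hsrc : (back.map Prod.fst).restrict A ≪ (σ.restrict (Prod.snd ⁻¹' B)).map Prod.fst :=
    restrict_absolutelyContinuous_of_subset_posSet subset_rfl (absolutelyContinuous_of_le
      (map_mono ((hback.trans restrict_le_self).trans (Measure.le_add_left le_rfl)) measurable_fst))
  obtain ⟨θ, hθ0, hθback, hθsrc⟩ := exists_ne_zero_le_le_of_absolutelyContinuous hsrc
    (by rw [Ne, restrict_eq_zero, map_apply measurable_fst hA]
        exact measure_ne_zero_of_le_restrict (measurable_fst hA) hback hback0)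
  obtain ⟨γ, γ0, hγ⟩ := IH θ hθ0 hθsrc
  exact hγ.extend hfwd (hback.trans restrict_le_self) (hθback.trans restrict_le_self)
    (hback_snd ▸ hητ.trans restrict_le_self)

theorem exists_isAugmenting_of_le_layer [IsFiniteMeasure κ] {L : Set Y} (hLm : MeasurableSet L)
    (hL : (σ.map Prod.snd).restrict L ≪ κ) (k : ℕ) :
    ∀ ρ, ρ ≠ 0 → ρ ≤ (σ.restrict (Prod.snd ⁻¹' layer σ σ0 L k)).map Prod.fst →
      ∃ γ γ0, IsAugmenting σ σ0 ρ κ γ γ0 := by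
  induction k using Nat.strong_induction_on with
  | _ k IH =>
  intro ρ hρ hρsrc
  obtain ⟨fwd, hfwd, rfl⟩ := exists_le_map_eq_of_le_map measurable_fst hρsrc
  have hfwd0 : fwd ≠ 0 := by rintro rfl; simp at hρ
  have hBk := measurableSet_layer σ σ0 hLm k
  have hτ : fwd.map Prod.snd (layer σ σ0 L k) ≠ 0 := by
    rw [map_apply measurable_snd hBk]
    exact measure_ne_zero_of_le_restrict (measurable_snd hBk) hfwd hfwd0
  rcases measure_layer_ne_zero σ σ0 _ hτ with hτL | ⟨j, hjk, hτj⟩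
  · exact exists_isAugmenting_of_absorb hL (hfwd.trans restrict_le_self) hτL
  · exact exists_isAugmenting_of_bounce (IH j hjk) (hfwd.trans restrict_le_self) hτj

theorem exists_isAugmenting [IsFiniteMeasure κ] {L : Set Y} (hLm : MeasurableSet L)
    (hL : (σ.map Prod.snd).restrict L ≪ κ)
    (hsat : (σ.map Prod.snd).restrict Lᶜ ≤ (σ0.map Prod.snd).restrict Lᶜ)
    (hmass : σ0 Set.univ < σ Set.univ) :
    ∃ γ γ0, IsAugmenting σ σ0 (σ.map Prod.fst - σ0.map Prod.fst) κ γ γ0 := by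
  obtain ⟨k, hk⟩ := exists_sub_apply_sourceOf_layer_ne_zero σ σ0 hLm hsat hmass
  obtain ⟨ρ, hρ0, hρμ, hρsrc⟩ := exists_ne_zero_le_le_of_absolutelyContinuous
    (restrict_absolutelyContinuous_of_subset_posSet subset_rfl (absolutelyContinuous_of_le
      (sub_le.trans (map_mono (Measure.le_add_right le_rfl) measurable_fst))))
    (by rwa [Ne, restrict_eq_zero])
  obtain ⟨γ, γ0, h⟩ := exists_isAugmenting_of_le_layer hLm hL k ρ hρ0 hρsrc
  exact ⟨γ, γ0, { h with
    map_fst_le_add := h.map_fst_le_add.trans (by gcongr; exact hρμ.trans restrict_le_self) }⟩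

end AugmentingSubplan

/- `X` is `Ω_ι` and `Y` is `Ω_ῑ`; for finite measures, `μ - ν` is the positive part of the signed
measure `μ - ν`, and `{y | 1 ≤ dψ0/db y}` is `Lᶜ`. -/
theorem measure_theoretic_augmenting_subplan
    {X Y : Type} [MeasurableSpace X] [MeasurableSpace Y]
    (b : Measure Y) [IsFiniteMeasure b]
    (σ σ0 : Measure (X × Y)) [IsFiniteMeasure σ] [IsFiniteMeasure σ0]
    (hψ : σ.map Prod.snd ≤ b) (hψ0 : σ0.map Prod.snd ≤ b)
    (hmass : σ0 Set.univ < σ Set.univ) :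
    ∃ γ γ0 : Measure (X × Y),
      γ ≤ σ ∧ γ0 ≤ σ0 ∧
      -- (i)  α0 ≤ α and 0 ≠ α − α0 ≤ (ξ − ξ0)⁺
      γ0.map Prod.fst ≤ γ.map Prod.fst ∧
      γ.map Prod.fst - γ0.map Prod.fst ≠ 0 ∧
      γ.map Prod.fst - γ0.map Prod.fst ≤ σ.map Prod.fst - σ0.map Prod.fst ∧
      -- (ii) β0 ≤ β, β − β0 ≠ 0, and β − β0 is carried by L
      γ0.map Prod.snd ≤ γ.map Prod.snd ∧
      γ.map Prod.snd - γ0.map Prod.snd ≠ 0 ∧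
      (γ.map Prod.snd - γ0.map Prod.snd)
          {y : Y | 1 ≤ (σ0.map Prod.snd).rnDeriv b y} = 0 ∧
      -- (iii) ψ0 − β0 + β ≤ b
      σ0.map Prod.snd - γ0.map Prod.snd + γ.map Prod.snd ≤ b := by
  have hψ0b : σ0.map Prod.snd ≪ b := Measure.absolutelyContinuous_of_le hψ0
  set L := {y | (σ0.map Prod.snd).rnDeriv b y < 1}
  have hLc : Lᶜ = {y | 1 ≤ (σ0.map Prod.snd).rnDeriv b y} := by ext; simp [L]
  have habsorb : (σ.map Prod.snd).restrict L ≪ b - σ0.map Prod.snd :=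
    (Measure.absolutelyContinuous_of_le (Measure.restrict_mono subset_rfl hψ)).trans
      (Measure.restrict_setOf_rnDeriv_lt_one_absolutelyContinuous_sub hψ0b)
  have hsat : (σ.map Prod.snd).restrict Lᶜ ≤ (σ0.map Prod.snd).restrict Lᶜ := by
    rw [hLc]
    exact (Measure.restrict_mono subset_rfl hψ).trans
      (Measure.restrict_setOf_one_le_rnDeriv_le hψ0b)
  obtain ⟨γ, γ0, h⟩ := AugmentingSubplan.exists_isAugmenting
    (measurableSet_lt (Measure.measurable_rnDeriv _ _) measurable_const) habsorb hsat hmass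
  have : IsFiniteMeasure γ0 := isFiniteMeasure_of_le σ0 h.le0
  have hβ0 : γ0.map Prod.snd ≤ σ0.map Prod.snd := Measure.map_mono h.le0 measurable_snd
  refine ⟨γ, γ0, h.le, h.le0, h.map_fst_le, h.map_sub_map_ne_zero measurable_fst,
    h.map_fst_sub_le, h.map_snd_le, h.map_sub_map_ne_zero measurable_snd,
    le_zero_iff.mp ((h.map_snd_sub_le _).trans (Measure.sub_apply_setOf_one_le_rnDeriv hψ0b).le),
    ?_⟩
  calc σ0.map Prod.snd - γ0.map Prod.snd + γ.map Prod.snd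
      ≤ σ0.map Prod.snd - γ0.map Prod.snd + (γ0.map Prod.snd + (b - σ0.map Prod.snd)) := by
        gcongr; exact h.map_snd_le_add
    _ = b := by
        rw [← add_assoc, Measure.sub_add_cancel_of_le hβ0, add_comm,
          Measure.sub_add_cancel_of_le hψ0]
end
end

section
/- Let (Ω, Σ) be a measurable space, A a convex set of finite measures on Ω, Q a finite measure on Ω, and θ : [0,∞) → ℝ ∪ {+∞} proper, convex, lower semicontinuous, and strictly convex on its effective domain. Suppose P0, P1 ∈ A satisfy D_θ(P0‖Q) = D_θ(P1‖Q) = inf{D_θ(P‖Q) : P ∈ A} < ∞. Then the Q-absolutely continuous parts of P0 and P1 coincide (equivalently, dP0/dQ = dP1/dQ Q-almost everywhere). If in addition θ'_∞ = +∞, then the Q-singular parts of P0 and P1 are both zero. -/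
open MeasureTheory ProbabilityTheory Filter
open scoped ENNReal NNReal

noncomputable section

/-- `θ : [0,∞) → ℝ ∪ {+∞}` is proper, convex and lower semicontinuous. -/
structure ProperConvexLSCOn (θ : ℝ → EReal) : Prop where
  ne_bot : ∀ x : ℝ, 0 ≤ x → θ x ≠ ⊥
  exists_ne_top : ∃ x : ℝ, 0 ≤ x ∧ θ x ≠ ⊤
  convex : ∀ x y a b : ℝ, 0 ≤ x → 0 ≤ y → 0 ≤ a → 0 ≤ b → a + b = 1 →
    θ (a * x + b * y) ≤ (a : EReal) * θ x + (b : EReal) * θ y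
  lsc : LowerSemicontinuousOn θ (Set.Ici 0)

/-- `θ` is strictly convex on its effective domain (within `[0,∞)`). -/
def StrictlyConvexOnDom (θ : ℝ → EReal) : Prop :=
  ∀ x y a b : ℝ, 0 ≤ x → 0 ≤ y → x ≠ y → θ x ≠ ⊤ → θ y ≠ ⊤ → 0 < a → 0 < b → a + b = 1 →
    θ (a * x + b * y) < (a : EReal) * θ x + (b : EReal) * θ y

/-!
A proper convex `θ` on `[0, ∞)` lies above an affine function. Hence the negative part of
`θ (dP/dQ)` is `Q`-integrable and `θ'_∞ > -∞`, so a finite divergence splits into a finite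
integral term and a finite singular term `θ'_∞ · P⊥(Ω)`; in particular `P⊥ = 0` when
`θ'_∞ = ∞`. Along a mixture `a P₀ + b P₁` the density is `a r₀ + b r₁` and the singular term is
affine, while strict convexity of `θ` puts the integral term strictly below the corresponding
mixture of integral terms unless `r₀ = r₁` `Q`-a.e. So if two minimisers had different densities,
their midpoint, which lies in `A`, would have divergence below the infimum.
-/

open Set

namespace ProperConvexLSCOn

variable {θ : ℝ → EReal}

lemma coe_toReal (hθ : ProperConvexLSCOn θ) {x : ℝ} (hx : 0 ≤ x) (hθx : θ x ≠ ⊤) :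
    ((θ x).toReal : EReal) = θ x :=
  EReal.coe_toReal hθx (hθ.ne_bot x hx)

lemma apply_le_chord (hθ : ProperConvexLSCOn θ) {x z tx tz y : ℝ} (hx : 0 ≤ x) (hxz : x < z)
    (hθx : θ x = tx) (hθz : θ z = tz) (hxy : x ≤ y) (hyz : y ≤ z) :
    θ y ≤ (((z - y) * tx + (y - x) * tz) / (z - x) : ℝ) := by
  have hzx : 0 < z - x := sub_pos.2 hxz
  have hconv := hθ.convex x z ((z - y) / (z - x)) ((y - x) / (z - x)) hx (by linarith)
    (div_nonneg (by linarith) hzx.le) (div_nonneg (by linarith) hzx.le)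
    (by field_simp; ring)
  have hy : (z - y) / (z - x) * x + (y - x) / (z - x) * z = y := by field_simp; ring
  rw [hy, hθx, hθz] at hconv
  refine hconv.trans_eq ?_
  norm_cast
  field_simp

lemma chord_le_apply_of_notMem_Ioo (hθ : ProperConvexLSCOn θ) {u v tu tv x : ℝ} (hu : 0 ≤ u)
    (huv : u < v) (hθu : θ u = tu) (hθv : θ v = tv) (hx : 0 ≤ x) (hxuv : x ∉ Ioo u v) :
    ((tu + (tv - tu) / (v - u) * (x - u) : ℝ) : EReal) ≤ θ x := by
  rcases eq_or_ne (θ x) ⊤ with hθx | hθx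
  · simp [hθx]
  have hθx' : θ x = ((θ x).toReal : ℝ) := (hθ.coe_toReal hx hθx).symm
  rw [hθx', EReal.coe_le_coe_iff]
  set tx := (θ x).toReal
  have hvu : 0 < v - u := sub_pos.2 huv
  have hline : (v - u) * (tu + (tv - tu) / (v - u) * (x - u))
      = (v - u) * tu + (tv - tu) * (x - u) := by field_simp
  refine le_of_mul_le_mul_left ?_ hvu
  rw [hline]
  rcases le_or_gt x u with hxu | hux
  · have h := hθ.apply_le_chord hx (hxu.trans_lt huv) hθx' hθv hxu huv.le
    rw [hθu, EReal.coe_le_coe_iff, le_div_iff₀ (by linarith)] at h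
    linarith
  · have hvx : v ≤ x := not_lt.1 fun hxv => hxuv ⟨hux, hxv⟩
    have h := hθ.apply_le_chord hu (huv.trans_le hvx) hθu hθx' huv.le hvx
    rw [hθv, EReal.coe_le_coe_iff, le_div_iff₀ (by linarith)] at h
    linarith

lemma exists_affine_minorant_of_lt (hθ : ProperConvexLSCOn θ) {u v : ℝ} (hu : 0 ≤ u)
    (huv : u < v) (hθu : θ u ≠ ⊤) (hθv : θ v ≠ ⊤) :
    ∃ a c : ℝ, ∀ x, 0 ≤ x → ((a * x + c : ℝ) : EReal) ≤ θ x := by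
  set m := (u + v) / 2 with hm
  have hum : u < m := by linarith
  have hmv : m < v := by linarith
  have hθu' := (hθ.coe_toReal hu hθu).symm
  have hθv' := (hθ.coe_toReal (by linarith) hθv).symm
  have hθm : θ m ≠ ⊤ :=
    ne_top_of_le_ne_top (EReal.coe_ne_top _) (hθ.apply_le_chord hu huv hθu' hθv' hum.le hmv.le)
  have hθm' := (hθ.coe_toReal (by linarith) hθm).symm
  set tu := (θ u).toReal
  set tv := (θ v).toReal
  set tm := (θ m).toReal
  set s₁ := (tm - tu) / (m - u)
  set s₂ := (tv - tm) / (v - m)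
  refine ⟨min s₁ s₂, min (tu - s₁ * u) (tm - s₂ * m), fun x hx => ?_⟩
  have hs₁ := mul_le_mul_of_nonneg_right (min_le_left s₁ s₂) hx
  have hs₂ := mul_le_mul_of_nonneg_right (min_le_right s₁ s₂) hx
  have hc₁ := min_le_left (tu - s₁ * u) (tm - s₂ * m)
  have hc₂ := min_le_right (tu - s₁ * u) (tm - s₂ * m)
  -- The chord through `m, v` bounds `θ` below on `x ≤ m`, the chord through `u, m` on `x ≥ m`.
  rcases le_total x m with hxm | hmx
  · refine le_trans ?_
      (hθ.chord_le_apply_of_notMem_Ioo (by linarith) hmv hθm' hθv' hx fun h => h.1.not_ge hxm)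
    rw [EReal.coe_le_coe_iff]
    linarith
  · refine le_trans ?_
      (hθ.chord_le_apply_of_notMem_Ioo hu hum hθu' hθm' hx fun h => h.2.not_ge hmx)
    rw [EReal.coe_le_coe_iff]
    linarith

lemma exists_affine_minorant (hθ : ProperConvexLSCOn θ) :
    ∃ a c : ℝ, ∀ x, 0 ≤ x → ((a * x + c : ℝ) : EReal) ≤ θ x := by
  obtain ⟨u, hu, hθu⟩ := hθ.exists_ne_top
  by_cases hdom : ∃ v, 0 ≤ v ∧ v ≠ u ∧ θ v ≠ ⊤
  · obtain ⟨v, hv, hvu, hθv⟩ := hdom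
    rcases hvu.lt_or_gt with h | h
    · exact hθ.exists_affine_minorant_of_lt hv h hθv hθu
    · exact hθ.exists_affine_minorant_of_lt hu h hθu hθv
  · push Not at hdom
    refine ⟨0, (θ u).toReal, fun x hx => ?_⟩
    rcases eq_or_ne x u with rfl | hxu
    · simp [hθ.coe_toReal hx hθu]
    · simp [hdom x hx hxu]

lemma recessionSlope_ne_bot (hθ : ProperConvexLSCOn θ) : recessionSlope θ ≠ ⊥ := by
  obtain ⟨a, c, hac⟩ := hθ.exists_affine_minorant
  have hev : ∀ᶠ t : ℝ in atTop, ((a - |c| : ℝ) : EReal) ≤ θ t * ((t⁻¹ : ℝ) : EReal) := by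
    filter_upwards [eventually_ge_atTop 1] with t ht
    have ht0 : 0 < t := by linarith
    calc ((a - |c| : ℝ) : EReal) ≤ ((a * t + c : ℝ) : EReal) * ((t⁻¹ : ℝ) : EReal) := by
          rw [← EReal.coe_mul, EReal.coe_le_coe_iff, ← div_eq_mul_inv, le_div_iff₀ ht0]
          nlinarith [abs_nonneg c, neg_abs_le c]
      _ ≤ θ t * ((t⁻¹ : ℝ) : EReal) :=
          mul_le_mul_of_nonneg_right (hac t ht0.le) (EReal.coe_nonneg.2 (inv_nonneg.2 ht0.le))
  exact ne_bot_of_le_ne_bot (EReal.coe_ne_bot _) (le_limsup_of_frequently_le hev.frequently)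

lemma lintegral_toENNReal_neg_comp_ne_top (hθ : ProperConvexLSCOn θ) {Ω : Type*}
    [MeasurableSpace Ω] {μ : Measure Ω} [IsFiniteMeasure μ] {g : Ω → ℝ≥0∞}
    (hg : ∫⁻ x, g x ∂μ ≠ ⊤) : ∫⁻ x, (-θ (g x).toReal).toENNReal ∂μ ≠ ⊤ := by
  obtain ⟨a, c, hac⟩ := hθ.exists_affine_minorant
  have hle : ∀ x, (-θ (g x).toReal).toENNReal ≤ ENNReal.ofReal |a| * g x + ENNReal.ofReal |c| := by
    intro x
    have ht : 0 ≤ (g x).toReal := ENNReal.toReal_nonneg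
    have hneg : -θ (g x).toReal ≤ ((|a| * (g x).toReal + |c| : ℝ) : EReal) := by
      refine (EReal.neg_le_neg_iff.2 (hac _ ht)).trans ?_
      rw [← EReal.coe_neg, EReal.coe_le_coe_iff]
      nlinarith [neg_abs_le a, neg_abs_le c]
    calc (-θ (g x).toReal).toENNReal
        ≤ ENNReal.ofReal (|a| * (g x).toReal + |c|) := EReal.toENNReal_le_toENNReal hneg
      _ ≤ ENNReal.ofReal |a| * g x + ENNReal.ofReal |c| := by
          rw [ENNReal.ofReal_add (by positivity) (abs_nonneg c), ENNReal.ofReal_mul (abs_nonneg a)]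
          gcongr
          exact ENNReal.ofReal_toReal_le
  refine ne_top_of_le_ne_top ?_ (lintegral_mono hle)
  rw [lintegral_add_right _ measurable_const, lintegral_const_mul' _ _ ENNReal.ofReal_ne_top,
    lintegral_const]
  exact ENNReal.add_ne_top.2 ⟨ENNReal.mul_ne_top ENNReal.ofReal_ne_top hg,
    ENNReal.mul_ne_top ENNReal.ofReal_ne_top (measure_ne_top _ _)⟩

end ProperConvexLSCOn

lemma LowerSemicontinuousOn.measurable_comp {α Ω : Type*} [TopologicalSpace α]
    [MeasurableSpace α] [OpensMeasurableSpace α] [MeasurableSpace Ω] {θ : α → EReal} {s : Set α}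
    (hθ : LowerSemicontinuousOn θ s) {g : Ω → α} (hg : Measurable g) (hgs : ∀ x, g x ∈ s) :
    Measurable fun x => θ (g x) :=
  (lowerSemicontinuous_restrict_iff.2 hθ).measurable.comp (hg.subtype_mk (h := hgs))

-- Also at `⊥` and `⊤`, where both sides are `0`.
lemma EReal.toReal_eq_toReal_toENNReal_sub (x : EReal) :
    x.toReal = x.toENNReal.toReal - (-x).toENNReal.toReal := by
  induction x with
  | bot => simp
  | top => simp
  | coe r =>
    rw [← EReal.coe_neg, EReal.real_coe_toENNReal, EReal.real_coe_toENNReal, EReal.toReal_coe,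
      ENNReal.toReal_ofReal', ENNReal.toReal_ofReal']
    rcases le_total 0 r with h | h <;> simp [h]

lemma integral_lt_integral_of_ae_le_of_measure_setOf_lt_ne_zero {Ω : Type*} [MeasurableSpace Ω]
    {μ : Measure Ω} {f g : Ω → ℝ} (hf : Integrable f μ) (hg : Integrable g μ) (hfg : f ≤ᵐ[μ] g)
    (hlt : μ {x | f x < g x} ≠ 0) : ∫ x, f x ∂μ < ∫ x, g x ∂μ := by
  rw [← sub_pos, ← integral_sub hg hf]
  refine (integral_pos_iff_support_of_nonneg_ae ?_ (hg.sub hf)).2 (pos_iff_ne_zero.2 ?_)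
  · filter_upwards [hfg] with x hx using sub_nonneg.2 hx
  · refine fun h => hlt (measure_mono_null (fun x hx => ?_) h)
    exact sub_ne_zero.2 (ne_of_gt hx)

section ERealIntegral

variable {Ω : Type} [MeasurableSpace Ω] {μ : Measure Ω} {f : Ω → EReal}

-- `erealToENNReal` unfolds to `EReal.toENNReal`, whose Mathlib API is used from here on.
lemma erealIntegral_eq (μ : Measure Ω) (f : Ω → EReal) :
    erealIntegral μ f = ((∫⁻ x, (f x).toENNReal ∂μ : ℝ≥0∞) : EReal)
      - ((∫⁻ x, (-f x).toENNReal ∂μ : ℝ≥0∞) : EReal) := rfl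

lemma erealIntegral_ne_bot (hneg : ∫⁻ x, (-f x).toENNReal ∂μ ≠ ⊤) : erealIntegral μ f ≠ ⊥ := by
  rw [erealIntegral_eq, ← EReal.coe_ennreal_toReal hneg, sub_eq_add_neg, ← EReal.coe_neg]
  exact EReal.add_ne_bot_iff.2 ⟨EReal.coe_ennreal_ne_bot _, EReal.coe_ne_bot _⟩

lemma lintegral_toENNReal_ne_top_of_erealIntegral_ne_top (hneg : ∫⁻ x, (-f x).toENNReal ∂μ ≠ ⊤)
    (h : erealIntegral μ f ≠ ⊤) : ∫⁻ x, (f x).toENNReal ∂μ ≠ ⊤ := by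
  intro hpos
  rw [erealIntegral_eq, hpos, ← EReal.coe_ennreal_toReal hneg, EReal.coe_ennreal_top] at h
  exact h (EReal.top_sub_coe _)

lemma integrable_toReal_of_lintegral_toENNReal_ne_top (hf : AEMeasurable f μ)
    (hpos : ∫⁻ x, (f x).toENNReal ∂μ ≠ ⊤) (hneg : ∫⁻ x, (-f x).toENNReal ∂μ ≠ ⊤) :
    Integrable (fun x => (f x).toReal) μ := by
  simp_rw [EReal.toReal_eq_toReal_toENNReal_sub]
  exact (integrable_toReal_of_lintegral_ne_top hf.ereal_toENNReal hpos).sub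
    (integrable_toReal_of_lintegral_ne_top hf.neg.ereal_toENNReal hneg)

lemma erealIntegral_eq_integral_toReal (hf : AEMeasurable f μ)
    (hpos : ∫⁻ x, (f x).toENNReal ∂μ ≠ ⊤) (hneg : ∫⁻ x, (-f x).toENNReal ∂μ ≠ ⊤) :
    erealIntegral μ f = ((∫ x, (f x).toReal ∂μ : ℝ) : EReal) := by
  have hf' : AEMeasurable (fun x => (-f x).toENNReal) μ := hf.neg.ereal_toENNReal
  simp_rw [EReal.toReal_eq_toReal_toENNReal_sub]
  rw [integral_sub (integrable_toReal_of_lintegral_ne_top hf.ereal_toENNReal hpos)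
      (integrable_toReal_of_lintegral_ne_top hf' hneg),
    integral_toReal hf.ereal_toENNReal (ae_lt_top' hf.ereal_toENNReal hpos),
    integral_toReal hf' (ae_lt_top' hf' hneg), EReal.coe_sub, EReal.coe_ennreal_toReal hpos,
    EReal.coe_ennreal_toReal hneg, erealIntegral_eq]

lemma erealIntegral_lt_integral {g : Ω → ℝ} (hf : AEMeasurable f μ)
    (hneg : ∫⁻ x, (-f x).toENNReal ∂μ ≠ ⊤) (hg : Integrable g μ) (hfg : ∀ᵐ x ∂μ, f x ≤ g x)
    (hlt : μ {x | f x < g x} ≠ 0) : erealIntegral μ f < ((∫ x, g x ∂μ : ℝ) : EReal) := by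
  have hpos : ∫⁻ x, (f x).toENNReal ∂μ ≠ ⊤ := by
    refine ne_top_of_le_ne_top hg.lintegral_lt_top.ne (lintegral_mono_ae ?_)
    filter_upwards [hfg] with x hx using EReal.toENNReal_le_toENNReal hx
  have hbot : ∀ᵐ x ∂μ, f x ≠ ⊥ := by
    filter_upwards [ae_lt_top' hf.neg.ereal_toENNReal hneg] with x hx hfx
    simp [hfx] at hx
  have hreal : ∀ᵐ x ∂μ, f x = ((f x).toReal : EReal) := by
    filter_upwards [ae_lt_top' hf.ereal_toENNReal hpos, hbot] with x hx hxb
    exact (EReal.coe_toReal (EReal.toENNReal_ne_top_iff.1 hx.ne) hxb).symm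
  have hsub : {x | f x < g x} ≤ᵐ[μ] {x | (f x).toReal < g x} := by
    filter_upwards [hreal] with x hx
    change f x < g x → (f x).toReal < g x
    rw [hx]
    exact EReal.coe_lt_coe_iff.1
  rw [erealIntegral_eq_integral_toReal hf hpos hneg, EReal.coe_lt_coe_iff]
  refine integral_lt_integral_of_ae_le_of_measure_setOf_lt_ne_zero
    (integrable_toReal_of_lintegral_toENNReal_ne_top hf hpos hneg) hg ?_
    fun h0 => hlt (measure_mono_null_ae hsub h0)
  filter_upwards [hfg, hreal] with x hx hxr
  rw [hxr] at hx
  exact EReal.coe_le_coe_iff.1 hx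

end ERealIntegral

section Mixture

variable {Ω : Type} [MeasurableSpace Ω] {P₀ P₁ Q : Measure Ω} [IsFiniteMeasure P₀]
  [IsFiniteMeasure P₁]

lemma measure_rnDeriv_toReal_ne_ne_zero (hne : ¬ P₀.rnDeriv Q =ᵐ[Q] P₁.rnDeriv Q) :
    Q {x | (P₀.rnDeriv Q x).toReal ≠ (P₁.rnDeriv Q x).toReal} ≠ 0 := by
  refine fun h => hne ?_
  filter_upwards [ae_iff.2 h, P₀.rnDeriv_lt_top Q, P₁.rnDeriv_lt_top Q] with x hx h₀ h₁
  exact (ENNReal.toReal_eq_toReal_iff' h₀.ne h₁.ne).1 hx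

variable [SigmaFinite Q]

lemma rnDeriv_smul_add_smul_toReal (a b : ℝ≥0) :
    ∀ᵐ x ∂Q, ((a • P₀ + b • P₁).rnDeriv Q x).toReal
      = a * (P₀.rnDeriv Q x).toReal + b * (P₁.rnDeriv Q x).toReal := by
  filter_upwards [Measure.rnDeriv_add (a • P₀) (b • P₁) Q, Measure.rnDeriv_smul_left P₀ Q a,
    Measure.rnDeriv_smul_left P₁ Q b, P₀.rnDeriv_lt_top Q, P₁.rnDeriv_lt_top Q]
    with x hx h₀ h₁ hlt₀ hlt₁
  rw [hx, Pi.add_apply, h₀, h₁, Pi.smul_apply, Pi.smul_apply, ENNReal.smul_def, ENNReal.smul_def,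
    smul_eq_mul, smul_eq_mul, ENNReal.toReal_add (by finiteness) (by finiteness),
    ENNReal.toReal_mul, ENNReal.toReal_mul, ENNReal.coe_toReal, ENNReal.coe_toReal]

lemma singularPart_smul_add_smul_apply (a b : ℝ≥0) (s : Set Ω) :
    (a • P₀ + b • P₁).singularPart Q s = a * P₀.singularPart Q s + b * P₁.singularPart Q s := by
  rw [Measure.singularPart_add, Measure.singularPart_smul, Measure.singularPart_smul]
  rfl

end Mixture

section ThetaDiv

variable {Ω : Type} [MeasurableSpace Ω] {θ : ℝ → EReal} {P P₀ P₁ Q : Measure Ω}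

def thetaDivAC (θ : ℝ → EReal) (P Q : Measure Ω) : EReal :=
  erealIntegral Q fun x => θ (P.rnDeriv Q x).toReal

def thetaDivSingular (θ : ℝ → EReal) (P Q : Measure Ω) : EReal :=
  recessionSlope θ * ((P.singularPart Q univ : ℝ≥0∞) : EReal)

lemma thetaDiv_eq_add (θ : ℝ → EReal) (P Q : Measure Ω) :
    thetaDiv θ P Q = thetaDivAC θ P Q + thetaDivSingular θ P Q := rfl

lemma measurable_theta_rnDeriv (hθ : LowerSemicontinuousOn θ (Ici 0)) (P Q : Measure Ω) :
    Measurable fun x => θ (P.rnDeriv Q x).toReal :=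
  hθ.measurable_comp (P.measurable_rnDeriv Q).ennreal_toReal fun _ => ENNReal.toReal_nonneg

lemma thetaDivSingular_ne_bot (hθ : ProperConvexLSCOn θ) [IsFiniteMeasure P] :
    thetaDivSingular θ P Q ≠ ⊥ :=
  (EReal.mul_ne_bot _ _).2 ⟨.inl hθ.recessionSlope_ne_bot, .inr (EReal.coe_ennreal_ne_bot _),
    .inr (EReal.coe_ennreal_nonneg _),
    .inr (EReal.coe_ennreal_eq_top_iff.not.2 (measure_ne_top _ _))⟩

lemma thetaDivSingular_smul_add_smul [IsFiniteMeasure P₀] [IsFiniteMeasure P₁] [SigmaFinite Q]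
    (a b : ℝ≥0) :
    thetaDivSingular θ (a • P₀ + b • P₁) Q
      = (a : ℝ) * thetaDivSingular θ P₀ Q + (b : ℝ) * thetaDivSingular θ P₁ Q := by
  rw [thetaDivSingular, singularPart_smul_add_smul_apply, EReal.coe_ennreal_add,
    EReal.coe_ennreal_mul, EReal.coe_ennreal_mul, EReal.coe_nnreal_eq_coe_real,
    EReal.coe_nnreal_eq_coe_real, EReal.left_distrib_of_nonneg (by positivity) (by positivity),
    mul_left_comm, mul_left_comm (recessionSlope θ)]
  rfl

variable [IsFiniteMeasure Q]

lemma ProperConvexLSCOn.lintegral_neg_theta_rnDeriv_ne_top (hθ : ProperConvexLSCOn θ)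
    [IsFiniteMeasure P] : ∫⁻ x, (-θ (P.rnDeriv Q x).toReal).toENNReal ∂Q ≠ ⊤ :=
  hθ.lintegral_toENNReal_neg_comp_ne_top (P.lintegral_rnDeriv_lt_top Q).ne

lemma thetaDiv_ne_top_iff (hθ : ProperConvexLSCOn θ) [IsFiniteMeasure P] :
    thetaDiv θ P Q ≠ ⊤ ↔ thetaDivAC θ P Q ≠ ⊤ ∧ thetaDivSingular θ P Q ≠ ⊤ :=
  EReal.add_ne_top_iff_ne_top₂ (erealIntegral_ne_bot hθ.lintegral_neg_theta_rnDeriv_ne_top)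
    (thetaDivSingular_ne_bot hθ)

lemma singularPart_eq_zero_of_thetaDiv_ne_top (hθ : ProperConvexLSCOn θ) [IsFiniteMeasure P]
    (hslope : recessionSlope θ = ⊤) (h : thetaDiv θ P Q ≠ ⊤) : P.singularPart Q = 0 := by
  rw [← Measure.measure_univ_eq_zero]
  by_contra h₀
  exact ((thetaDiv_ne_top_iff hθ).1 h).2 (by
    rw [thetaDivSingular, hslope, EReal.top_mul_coe_ennreal h₀])

lemma thetaDivAC_eq_integral_toReal (hθ : ProperConvexLSCOn θ) [IsFiniteMeasure P]
    (h : thetaDivAC θ P Q ≠ ⊤) :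
    Integrable (fun x => (θ (P.rnDeriv Q x).toReal).toReal) Q ∧
      (∀ᵐ x ∂Q, θ (P.rnDeriv Q x).toReal = (θ (P.rnDeriv Q x).toReal).toReal) ∧
      thetaDivAC θ P Q = ((∫ x, (θ (P.rnDeriv Q x).toReal).toReal ∂Q : ℝ) : EReal) := by
  have hmeas := (measurable_theta_rnDeriv hθ.lsc P Q).aemeasurable (μ := Q)
  have hneg := hθ.lintegral_neg_theta_rnDeriv_ne_top (P := P) (Q := Q)
  have hpos := lintegral_toENNReal_ne_top_of_erealIntegral_ne_top hneg h
  refine ⟨integrable_toReal_of_lintegral_toENNReal_ne_top hmeas hpos hneg, ?_,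
    erealIntegral_eq_integral_toReal hmeas hpos hneg⟩
  filter_upwards [ae_lt_top' hmeas.ereal_toENNReal hpos] with x hx
  exact (hθ.coe_toReal ENNReal.toReal_nonneg (EReal.toENNReal_ne_top_iff.1 hx.ne)).symm

lemma thetaDivAC_smul_add_smul_lt (hθ : ProperConvexLSCOn θ) (hθs : StrictlyConvexOnDom θ)
    [IsFiniteMeasure P₀] [IsFiniteMeasure P₁] {a b : ℝ≥0} (ha : 0 < a) (hb : 0 < b)
    (hab : a + b = 1) (h₀ : thetaDivAC θ P₀ Q ≠ ⊤) (h₁ : thetaDivAC θ P₁ Q ≠ ⊤)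
    (hne : ¬ P₀.rnDeriv Q =ᵐ[Q] P₁.rnDeriv Q) :
    thetaDivAC θ (a • P₀ + b • P₁) Q
      < (a : ℝ) * thetaDivAC θ P₀ Q + (b : ℝ) * thetaDivAC θ P₁ Q := by
  obtain ⟨hint₀, hfin₀, heq₀⟩ := thetaDivAC_eq_integral_toReal hθ h₀
  obtain ⟨hint₁, hfin₁, heq₁⟩ := thetaDivAC_eq_integral_toReal hθ h₁
  set r₀ := fun x => (P₀.rnDeriv Q x).toReal
  set r₁ := fun x => (P₁.rnDeriv Q x).toReal
  set g := fun x => (a : ℝ) * (θ (r₀ x)).toReal + (b : ℝ) * (θ (r₁ x)).toReal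
  have hab' : (a : ℝ) + b = 1 := by exact_mod_cast hab
  have hg : ∀ᵐ x ∂Q, (a : ℝ) * θ (r₀ x) + (b : ℝ) * θ (r₁ x) = g x := by
    filter_upwards [hfin₀, hfin₁] with x h₀x h₁x
    rw [h₀x, h₁x]
    norm_cast
  have hmix := rnDeriv_smul_add_smul_toReal (P₀ := P₀) (P₁ := P₁) (Q := Q) a b
  have hstrict : {x | r₀ x ≠ r₁ x} ≤ᵐ[Q] {x | θ ((a • P₀ + b • P₁).rnDeriv Q x).toReal < g x} := by
    filter_upwards [hmix, hg, hfin₀, hfin₁] with x hx hgx h₀x h₁x hr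
    change θ _ < g x
    rw [hx, ← hgx]
    exact hθs _ _ _ _ ENNReal.toReal_nonneg ENNReal.toReal_nonneg hr (h₀x ▸ EReal.coe_ne_top _)
      (h₁x ▸ EReal.coe_ne_top _) ha hb hab'
  rw [heq₀, heq₁, ← EReal.coe_mul, ← EReal.coe_mul, ← EReal.coe_add, ← integral_const_mul,
    ← integral_const_mul, ← integral_add (hint₀.const_mul _) (hint₁.const_mul _)]
  refine erealIntegral_lt_integral (measurable_theta_rnDeriv hθ.lsc _ Q).aemeasurable
    hθ.lintegral_neg_theta_rnDeriv_ne_top ((hint₀.const_mul _).add (hint₁.const_mul _)) ?_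
    fun h => measure_rnDeriv_toReal_ne_ne_zero hne (measure_mono_null_ae hstrict h)
  filter_upwards [hmix, hg] with x hx hgx
  rw [hx, ← hgx]
  exact hθ.convex _ _ _ _ ENNReal.toReal_nonneg ENNReal.toReal_nonneg a.2 b.2 hab'

lemma thetaDiv_smul_add_smul_lt (hθ : ProperConvexLSCOn θ) (hθs : StrictlyConvexOnDom θ)
    [IsFiniteMeasure P₀] [IsFiniteMeasure P₁] {a b : ℝ≥0} (ha : 0 < a) (hb : 0 < b)
    (hab : a + b = 1) (h₀ : thetaDiv θ P₀ Q ≠ ⊤) (h₁ : thetaDiv θ P₁ Q ≠ ⊤)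
    (hne : ¬ P₀.rnDeriv Q =ᵐ[Q] P₁.rnDeriv Q) :
    thetaDiv θ (a • P₀ + b • P₁) Q < (a : ℝ) * thetaDiv θ P₀ Q + (b : ℝ) * thetaDiv θ P₁ Q := by
  obtain ⟨hI₀, hS₀⟩ := (thetaDiv_ne_top_iff hθ).1 h₀
  obtain ⟨hI₁, hS₁⟩ := (thetaDiv_ne_top_iff hθ).1 h₁
  have hAC := thetaDivAC_smul_add_smul_lt hθ hθs ha hb hab hI₀ hI₁ hne
  lift thetaDivAC θ P₀ Q to ℝ using ⟨hI₀, erealIntegral_ne_bot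
    hθ.lintegral_neg_theta_rnDeriv_ne_top⟩ with I₀ hI₀'
  lift thetaDivAC θ P₁ Q to ℝ using ⟨hI₁, erealIntegral_ne_bot
    hθ.lintegral_neg_theta_rnDeriv_ne_top⟩ with I₁ hI₁'
  lift thetaDivSingular θ P₀ Q to ℝ using ⟨hS₀, thetaDivSingular_ne_bot hθ⟩ with S₀ hS₀'
  lift thetaDivSingular θ P₁ Q to ℝ using ⟨hS₁, thetaDivSingular_ne_bot hθ⟩ with S₁ hS₁'
  rw [thetaDiv_eq_add, thetaDiv_eq_add, thetaDiv_eq_add, thetaDivSingular_smul_add_smul, ← hI₀',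
    ← hI₁', ← hS₀', ← hS₁']
  convert EReal.add_lt_add_right_coe hAC ((a : ℝ) * S₀ + b * S₁) using 1
  · norm_cast
  · norm_cast
    ring

end ThetaDiv

theorem strict_convex_unique_ac_part
    {Ω : Type} [MeasurableSpace Ω]
    (A : Set (Measure Ω))
    (hAfin : ∀ P ∈ A, IsFiniteMeasure P)
    (hAconv : ∀ P ∈ A, ∀ P' ∈ A, ∀ c c' : ℝ≥0∞, c + c' = 1 → c • P + c' • P' ∈ A)
    (Q : Measure Ω) [IsFiniteMeasure Q]
    (θ : ℝ → EReal) (hθ : ProperConvexLSCOn θ) (hθstrict : StrictlyConvexOnDom θ)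
    (P0 P1 : Measure Ω) (h0 : P0 ∈ A) (h1 : P1 ∈ A)
    (hmin0 : thetaDiv θ P0 Q = sInf {d : EReal | ∃ P ∈ A, d = thetaDiv θ P Q})
    (hmin1 : thetaDiv θ P1 Q = sInf {d : EReal | ∃ P ∈ A, d = thetaDiv θ P Q})
    (hfin : sInf {d : EReal | ∃ P ∈ A, d = thetaDiv θ P Q} ≠ ⊤) :
    Q.withDensity (P0.rnDeriv Q) = Q.withDensity (P1.rnDeriv Q) ∧
      P0.rnDeriv Q =ᵐ[Q] P1.rnDeriv Q ∧
      (recessionSlope θ = ⊤ → P0.singularPart Q = 0 ∧ P1.singularPart Q = 0) := by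
  have := hAfin P0 h0
  have := hAfin P1 h1
  have hD0 : thetaDiv θ P0 Q ≠ ⊤ := hmin0 ▸ hfin
  have hD1 : thetaDiv θ P1 Q ≠ ⊤ := hmin1 ▸ hfin
  have hae : P0.rnDeriv Q =ᵐ[Q] P1.rnDeriv Q := by
    by_contra hne
    have hhalf : (1 / 2 : ℝ≥0) + (1 / 2) = 1 := add_halves (1 : ℝ≥0)
    have hmem : (1 / 2 : ℝ≥0) • P0 + (1 / 2 : ℝ≥0) • P1 ∈ A :=
      hAconv P0 h0 P1 h1 _ _ (by exact_mod_cast hhalf)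
    have hlt := thetaDiv_smul_add_smul_lt hθ hθstrict (by norm_num) (by norm_num) hhalf hD0 hD1 hne
    rw [hmin1, hmin0, ← EReal.right_distrib_of_nonneg (by positivity) (by positivity),
      ← EReal.coe_add, ← NNReal.coe_add, hhalf, NNReal.coe_one, EReal.coe_one, one_mul] at hlt
    exact (sInf_le ⟨_, hmem, rfl⟩ : sInf {d : EReal | ∃ P ∈ A, d = thetaDiv θ P Q} ≤ _).not_gt hlt
  exact ⟨withDensity_congr_ae hae, hae, fun h =>
    ⟨singularPart_eq_zero_of_thetaDiv_ne_top hθ h hD0,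
      singularPart_eq_zero_of_thetaDiv_ne_top hθ h hD1⟩⟩
end
end

section
/- Fix ι ∈ {0,1}. If π0, π1 ∈ Π_ι are both level-optimal maximin, then the ν_ῑ-absolutely continuous parts of their opposite marginals coincide: the absolutely continuous component of ν_ῑ^{(π0)} in its Lebesgue decomposition with respect to ν_ῑ equals that of ν_ῑ^{(π1)}. -/
/- STATEMENT 12: Uniqueness of the absolutely continuous opposite marginal
(Corollary `unique_ac_opposite_marginal_level_opt_maximin`).  The side `ι ∈ {0,1}` is
formalized abstractly: `X` plays the role of `Ω_ι` and `Y` of `Ω_ῑ`. -/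

open MeasureTheory ProbabilityTheory Filter
open scoped ENNReal NNReal

noncomputable section

variable {X Y : Type} [MeasurableSpace X] [MeasurableSpace Y]

/-- Refinements of `νY` on side `Y`. -/
def PlansSnd (E : Set (X × Y)) (νY : Measure Y) : Set (Measure (X × Y)) :=
  {π | IsFiniteMeasure π ∧ π Eᶜ = 0 ∧ π.map Prod.snd = νY}

/-- Maximal feasible mass at level `t`. -/
def Fit (E : Set (X × Y)) (νX : Measure X) (νY : Measure Y) (t : ℝ) : ℝ≥0∞ :=
  ⨆ σ ∈ Feas E νX νY t, σ Set.univ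

/-- Level-optimal maximin: at every level `t > 0` the truncated opposite marginal mass
realizes the maximal feasible mass. -/
def LevelOptMaximin (E : Set (X × Y)) (νX : Measure X) (νY : Measure Y)
    (π : Measure (X × Y)) : Prop :=
  ∀ t : ℝ, 0 < t →
    ∫⁻ y, min ((π.map Prod.snd).rnDeriv νY y) (ENNReal.ofReal t) ∂νY = Fit E νX νY t

/-! The midpoint `π = (π₀ + π₁)/2` is again a plan, with opposite density `(r₀ + r₁)/2`, and for
any subplan the truncated density `min(r, t)` is the opposite marginal of a feasible subplan. Hence
`∫ min((r₀ + r₁)/2, t) ≤ Fit(t) = (∫ min(r₀, t) + ∫ min(r₁, t))/2`. By concavity of `min(·, t)` the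
reverse inequality holds pointwise, so equality holds a.e. for every `t`. But concavity is strict
at every `t` strictly between `r₀(y)` and `r₁(y)`, and letting `t` range over the rationals gives
`r₀ = r₁` a.e. -/

section

variable {α β : Type*} [MeasurableSpace α] [MeasurableSpace β]

lemma map_withDensity_comp (π : Measure α) {φ : α → β} (hφ : Measurable φ) {g : β → ℝ≥0∞}
    (hg : Measurable g) : (π.withDensity (g ∘ φ)).map φ = (π.map φ).withDensity g := by
  ext A hA
  rw [Measure.map_apply hφ hA, withDensity_apply _ (hφ hA), withDensity_apply _ hA,
    setLIntegral_map hA hg hφ, Function.comp_def]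

lemma exists_le_map_eq_withDensity_of_le_rnDeriv {π : Measure α} [IsFiniteMeasure π]
    {φ : α → β} (hφ : Measurable φ) {ν : Measure β} [SigmaFinite ν] {f : β → ℝ≥0∞}
    (hf : Measurable f) (hfr : f ≤ (π.map φ).rnDeriv ν) :
    ∃ σ ≤ π, σ.map φ = ν.withDensity f := by
  set P := π.map φ
  set r := P.rnDeriv ν
  obtain ⟨s, hs, hPs, hνs⟩ := Measure.mutuallySingular_singularPart P ν
  -- Thin out `π` by the factor `f / r` on each fibre; cutting down to `s` discards the singular
  -- part of `π.map φ`.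
  set g : β → ℝ≥0∞ := s.indicator (f / r)
  have hg : Measurable g := (hf.div (Measure.measurable_rnDeriv P ν)).indicator hs
  have hg_le_one : ∀ y, g y ≤ 1 := fun y => by
    by_cases hy : y ∈ s
    · simpa [g, hy] using ENNReal.div_le_of_le_mul (by simpa using hfr y)
    · simp [g, hy]
  have hrg : r * g =ᵐ[ν] f := by
    filter_upwards [Measure.rnDeriv_lt_top P ν, measure_eq_zero_iff_ae_notMem.1 hνs]
      with y hr_lt hy
    have hy : y ∈ s := by simpa using hy
    by_cases hr0 : r y = 0
    · simp [g, hy, hr0, le_antisymm (hr0 ▸ hfr y) zero_le]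
    · simp [g, hy, ENNReal.mul_div_cancel hr0 hr_lt.ne]
  have hgP : g =ᵐ[P.singularPart ν] 0 := by
    filter_upwards [measure_eq_zero_iff_ae_notMem.1 hPs] with y hy
    simp [g, hy]
  refine ⟨π.withDensity (g ∘ φ), fun A => ?_, ?_⟩
  · calc π.withDensity (g ∘ φ) A ≤ π.withDensity 1 A :=
          withDensity_mono (Eventually.of_forall fun x => hg_le_one (φ x)) A
      _ = π A := by rw [withDensity_one]
  · rw [map_withDensity_comp π hφ hg]
    change P.withDensity g = _
    rw [← Measure.rnDeriv_add_singularPart P ν,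
      withDensity_add_measure, ← withDensity_mul _ (Measure.measurable_rnDeriv P ν) hg,
      withDensity_congr_ae hrg, withDensity_congr_ae hgP, withDensity_zero, add_zero]

lemma MeasureTheory.Measure.rnDeriv_inv_two_smul_add (μ₀ μ₁ ν : Measure α)
    [IsFiniteMeasure μ₀] [IsFiniteMeasure μ₁] [SigmaFinite ν] :
    ((2⁻¹ : ℝ≥0) • (μ₀ + μ₁)).rnDeriv ν
      =ᵐ[ν] fun y => 2⁻¹ * (μ₀.rnDeriv ν y + μ₁.rnDeriv ν y) := by
  filter_upwards [Measure.rnDeriv_smul_left (μ₀ + μ₁) ν 2⁻¹, Measure.rnDeriv_add μ₀ μ₁ ν]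
    with y hsmul hadd
  rw [hsmul, Pi.smul_apply, hadd, ENNReal.smul_def, ENNReal.coe_inv_two, smul_eq_mul, Pi.add_apply]

end

namespace ENNReal

lemma inv_two_mul_add_self (t : ℝ≥0∞) : 2⁻¹ * (t + t) = t := by
  rw [mul_add, ← add_mul, inv_two_add_inv_two, one_mul]

lemma inv_two_mul_add_min_le (a b t : ℝ≥0∞) :
    2⁻¹ * (min a t + min b t) ≤ min (2⁻¹ * (a + b)) t :=
  le_min (by gcongr <;> exact min_le_left _ _) <|
    calc 2⁻¹ * (min a t + min b t) ≤ 2⁻¹ * (t + t) := by gcongr <;> exact min_le_right _ _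
      _ = t := inv_two_mul_add_self t

lemma inv_two_mul_add_min_lt_of_lt_of_lt {a b t : ℝ≥0∞} (hat : a < t) (htb : t < b) :
    2⁻¹ * (min a t + min b t) < min (2⁻¹ * (a + b)) t := by
  have h0 : (2⁻¹ : ℝ≥0∞) ≠ 0 := by simp
  have htop : (2⁻¹ : ℝ≥0∞) ≠ ∞ := by simp
  rw [min_eq_left hat.le, min_eq_right htb.le]
  refine lt_min ?_ ?_
  · exact ENNReal.mul_lt_mul_right h0 htop (ENNReal.add_lt_add_left hat.ne_top htb)
  · calc 2⁻¹ * (a + t) < 2⁻¹ * (t + t) :=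
          ENNReal.mul_lt_mul_right h0 htop (ENNReal.add_lt_add_right htb.ne_top hat)
      _ = t := inv_two_mul_add_self t

lemma eq_of_forall_rat_inv_two_mul_add_min_eq {a b : ℝ≥0∞}
    (h : ∀ q : ℚ, 2⁻¹ * (min a (ENNReal.ofReal q) + min b (ENNReal.ofReal q))
      = min (2⁻¹ * (a + b)) (ENNReal.ofReal q)) : a = b := by
  wlog hab : a < b generalizing a b
  · rcases (not_lt.1 hab).eq_or_lt with rfl | hba
    · rfl
    · exact (this (fun q => by rw [add_comm, add_comm b]; exact h q) hba).symm
  obtain ⟨q, -, haq, hqb⟩ := ENNReal.lt_iff_exists_rat_btwn.1 hab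
  exact absurd (h q) (inv_two_mul_add_min_lt_of_lt_of_lt haq hqb).ne

end ENNReal

lemma inv_two_smul_add_mem_plans {E : Set (X × Y)} {νX : Measure X} {π₀ π₁ : Measure (X × Y)}
    (hπ₀ : π₀ ∈ Plans E νX) (hπ₁ : π₁ ∈ Plans E νX) :
    (2⁻¹ : ℝ≥0) • (π₀ + π₁) ∈ Plans E νX := by
  obtain ⟨hfin₀, hE₀, hX₀⟩ := hπ₀
  obtain ⟨hfin₁, hE₁, hX₁⟩ := hπ₁
  refine ⟨inferInstance, by simp [hE₀, hE₁], ?_⟩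
  rw [Measure.map_smul, Measure.map_add _ _ measurable_fst, hX₀, hX₁, ← two_smul ℝ≥0 νX,
    smul_smul, inv_mul_cancel₀ two_ne_zero, one_smul]

lemma lintegral_min_rnDeriv_map_snd_le_fit {E : Set (X × Y)} {νX : Measure X} {νY : Measure Y}
    [SigmaFinite νY] {π : Measure (X × Y)} [IsFiniteMeasure π] (hπE : π Eᶜ = 0)
    (hπX : π.map Prod.fst ≤ νX) (t : ℝ) :
    ∫⁻ y, min ((π.map Prod.snd).rnDeriv νY y) (ENNReal.ofReal t) ∂νY ≤ Fit E νX νY t := by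
  obtain ⟨σ, hσπ, hσY⟩ := exists_le_map_eq_withDensity_of_le_rnDeriv (π := π)
    measurable_snd ((Measure.measurable_rnDeriv _ νY).min measurable_const)
    fun y => min_le_left _ (ENNReal.ofReal t)
  have hσ : σ ∈ Feas E νX νY t := by
    refine ⟨isFiniteMeasure_of_le π hσπ, le_antisymm (hπE ▸ hσπ Eᶜ) zero_le,
      (Measure.map_mono hσπ measurable_fst).trans hπX, ?_⟩
    rw [hσY, ← withDensity_const]
    exact withDensity_mono (Eventually.of_forall fun y => min_le_right _ _)
  calc ∫⁻ y, min ((π.map Prod.snd).rnDeriv νY y) (ENNReal.ofReal t) ∂νY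
      = σ.map Prod.snd Set.univ := by
        rw [hσY, withDensity_apply _ MeasurableSet.univ, Measure.restrict_univ]
    _ = σ Set.univ := by rw [Measure.map_apply measurable_snd MeasurableSet.univ, Set.preimage_univ]
    _ ≤ Fit E νX νY t := le_biSup (fun σ => σ Set.univ) hσ

lemma LevelOptMaximin.inv_two_mul_add_min_rnDeriv_ae_eq {E : Set (X × Y)} {νX : Measure X}
    {νY : Measure Y} [SigmaFinite νY] {π₀ π₁ : Measure (X × Y)}
    (hπ₀ : π₀ ∈ Plans E νX) (hπ₁ : π₁ ∈ Plans E νX)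
    (hlom₀ : LevelOptMaximin E νX νY π₀) (hlom₁ : LevelOptMaximin E νX νY π₁) (t : ℝ) :
    (fun y => 2⁻¹ * (min ((π₀.map Prod.snd).rnDeriv νY y) (ENNReal.ofReal t)
        + min ((π₁.map Prod.snd).rnDeriv νY y) (ENNReal.ofReal t)))
      =ᵐ[νY] fun y => min (2⁻¹ * ((π₀.map Prod.snd).rnDeriv νY y
        + (π₁.map Prod.snd).rnDeriv νY y)) (ENNReal.ofReal t) := by
  rcases le_or_gt t 0 with ht | ht
  · simp [ENNReal.ofReal_of_nonpos ht]
  have := hπ₀.1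
  have := hπ₁.1
  have hmid := inv_two_smul_add_mem_plans hπ₀ hπ₁
  have := hmid.1
  set r₀ := (π₀.map Prod.snd).rnDeriv νY
  set r₁ := (π₁.map Prod.snd).rnDeriv νY
  have hm₀ : Measurable fun y => min (r₀ y) (ENNReal.ofReal t) :=
    (Measure.measurable_rnDeriv _ _).min measurable_const
  have hfit : ∫⁻ y, 2⁻¹ * (min (r₀ y) (ENNReal.ofReal t) + min (r₁ y) (ENNReal.ofReal t)) ∂νY
      = Fit E νX νY t := by
    rw [lintegral_const_mul' _ _ (by simp), lintegral_add_left hm₀, hlom₀ t ht, hlom₁ t ht,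
      ENNReal.inv_two_mul_add_self]
  have hmid_snd : ((2⁻¹ : ℝ≥0) • (π₀ + π₁)).map Prod.snd
      = (2⁻¹ : ℝ≥0) • (π₀.map Prod.snd + π₁.map Prod.snd) := by
    rw [Measure.map_smul, Measure.map_add _ _ measurable_snd]
  refine ae_eq_of_ae_le_of_lintegral_le
    (Eventually.of_forall fun y => ENNReal.inv_two_mul_add_min_le _ _ _) ?_ (by fun_prop) ?_
  · rw [hfit, ← hlom₀ t ht]
    exact ((lintegral_mono fun y => min_le_left _ _).trans_lt
      (Measure.lintegral_rnDeriv_lt_top _ _)).ne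
  · rw [hfit]
    calc ∫⁻ y, min (2⁻¹ * (r₀ y + r₁ y)) (ENNReal.ofReal t) ∂νY
        = ∫⁻ y, min ((((2⁻¹ : ℝ≥0) • (π₀ + π₁)).map Prod.snd).rnDeriv νY y)
            (ENNReal.ofReal t) ∂νY := by
          refine lintegral_congr_ae ?_
          filter_upwards [hmid_snd ▸ Measure.rnDeriv_inv_two_smul_add (π₀.map Prod.snd)
            (π₁.map Prod.snd) νY] with y hy
          rw [hy]
      _ ≤ Fit E νX νY t := lintegral_min_rnDeriv_map_snd_le_fit hmid.2.1 hmid.2.2.le t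

theorem unique_ac_opposite_marginal_level_opt_maximin_general
    (E : Set (X × Y))
    (νX : Measure X) (νY : Measure Y) [IsFiniteMeasure νY]
    (π0 π1 : Measure (X × Y)) (hπ0 : π0 ∈ Plans E νX) (hπ1 : π1 ∈ Plans E νX)
    (hlom0 : LevelOptMaximin E νX νY π0) (hlom1 : LevelOptMaximin E νX νY π1) :
    νY.withDensity ((π0.map Prod.snd).rnDeriv νY)
      = νY.withDensity ((π1.map Prod.snd).rnDeriv νY) := by
  refine withDensity_congr_ae ?_
  have hlevels := ae_all_iff.2 fun q : ℚ =>
    hlom0.inv_two_mul_add_min_rnDeriv_ae_eq hπ0 hπ1 hlom1 q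
  filter_upwards [hlevels] with y hy
  exact ENNReal.eq_of_forall_rat_inv_two_mul_add_min_eq hy

theorem unique_ac_opposite_marginal_level_opt_maximin
    [TopologicalSpace X] [PolishSpace X] [BorelSpace X]
    [TopologicalSpace Y] [PolishSpace Y] [BorelSpace Y]
    (E : Set (X × Y)) (hE : IsClosed E)
    (νX : Measure X) (νY : Measure Y) [IsFiniteMeasure νX] [IsFiniteMeasure νY]
    (hνX : 0 < νX Set.univ) (hνY : 0 < νY Set.univ)
    (hNbhdX : ∀ x : X, ∃ y : Y, (x, y) ∈ E) (hNbhdY : ∀ y : Y, ∃ x : X, (x, y) ∈ E)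
    (π0 π1 : Measure (X × Y)) (hπ0 : π0 ∈ Plans E νX) (hπ1 : π1 ∈ Plans E νX)
    (hlom0 : LevelOptMaximin E νX νY π0) (hlom1 : LevelOptMaximin E νX νY π1) :
    νY.withDensity ((π0.map Prod.snd).rnDeriv νY)
      = νY.withDensity ((π1.map Prod.snd).rnDeriv νY) :=
  unique_ac_opposite_marginal_level_opt_maximin_general E νX νY π0 π1 hπ0 hπ1 hlom0 hlom1
end
end
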